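/- arXiv:1904.04904 — 3 statements merged into one kernel-verified Lean document; each statement's English description precedes it below -/
import Mathlib

section
/- Let m ≥ 1 and let σ be a separable permutation of {1,…,m+1} that is alternating (a snake) and satisfies σ(m) > σ(m+1). Then there exist polynomials a_1,…,a_{m+1} ∈ ℝ[X] with a_i(0) = 0 for all i and a_i ≺₊ a_{i+1} for 1 ≤ i ≤ m, such that for all sufficiently small x > 0 the polynomial function Q_x(y) := ∫_0^y ∏_{ℓ=1}^{m+1} (t − a_ℓ(x)) dt satisfies: (1) the derivative of Q_x has exactly the m+1 simple real roots a_1(x) < a_2(x) < ⋯ < a_{m+1}(x); (2) the critical values Q_x(a_1(x)),…,Q_x(a_{m+1}(x)) are pairwise distinct; and (3) for all i, j ∈ {1,…,m+1}, Q_x(a_i(x)) < Q_x(a_j(x)) if and only if σ(i) < σ(j). -/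
set_option maxHeartbeats 1000000


/-- The direct sum `π ⊕ τ` of two permutations. -/
def permDirectSum {p q : ℕ} (π : Equiv.Perm (Fin p)) (τ : Equiv.Perm (Fin q)) :
    Equiv.Perm (Fin (p + q)) :=
  finSumFinEquiv.symm.trans ((Equiv.sumCongr π τ).trans finSumFinEquiv)

/-- The skew sum `π ⊖ τ` of two permutations. -/
def permSkewSum {p q : ℕ} (π : Equiv.Perm (Fin p)) (τ : Equiv.Perm (Fin q)) :
    Equiv.Perm (Fin (p + q)) :=
  finSumFinEquiv.symm.trans ((Equiv.sumCongr π τ).trans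
    ((Equiv.sumComm (Fin p) (Fin q)).trans (finSumFinEquiv.trans (finCongr (Nat.add_comm q p)))))

/-- Separable permutations: the smallest class containing the identity permutation of one
element and closed under direct sums and skew sums. -/
inductive PermSeparable : {n : ℕ} → Equiv.Perm (Fin n) → Prop
  | single : PermSeparable (Equiv.refl (Fin 1))
  | dsum {p q : ℕ} {π : Equiv.Perm (Fin p)} {τ : Equiv.Perm (Fin q)} :
      PermSeparable π → PermSeparable τ → PermSeparable (permDirectSum π τ)
  | ssum {p q : ℕ} {π : Equiv.Perm (Fin p)} {τ : Equiv.Perm (Fin q)} :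
      PermSeparable π → PermSeparable τ → PermSeparable (permSkewSum π τ)

/-- A permutation is alternating (a snake) iff consecutive comparisons alternate. -/
def IsAlternating {n : ℕ} (σ : Equiv.Perm (Fin n)) : Prop :=
  ∀ i : ℕ, ∀ h2 : i + 2 < n,
    (σ ⟨i, by omega⟩ < σ ⟨i + 1, by omega⟩ ↔ σ ⟨i + 2, h2⟩ < σ ⟨i + 1, by omega⟩)


open Polynomial

/-- `P ≺₊ Q`: `P(x) < Q(x)` for all sufficiently small `x > 0`. -/
def PrecPlus (P Q : Polynomial ℝ) : Prop :=
  ∃ x₀ > (0 : ℝ), ∀ x : ℝ, 0 < x → x < x₀ → P.eval x < Q.eval x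



variable {p q : ℕ} (π : Equiv.Perm (Fin p)) (τ : Equiv.Perm (Fin q))

lemma dsum_castAdd (i : Fin p) :
    permDirectSum π τ (Fin.castAdd q i) = Fin.castAdd q (π i) := by
  simp [permDirectSum]

lemma dsum_natAdd (j : Fin q) :
    permDirectSum π τ (Fin.natAdd p j) = Fin.natAdd p (τ j) := by
  simp [permDirectSum]

lemma ssum_castAdd (i : Fin p) :
    (permSkewSum π τ (Fin.castAdd q i)).val = q + (π i).val := by
  simp [permSkewSum]; omega

lemma ssum_natAdd (j : Fin q) :
    (permSkewSum π τ (Fin.natAdd p j)).val = (τ j).val := by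
  simp [permSkewSum]


def compPerm {n : ℕ} (σ : Equiv.Perm (Fin n)) : Equiv.Perm (Fin n) := σ.trans Fin.revPerm

lemma compPerm_val {n : ℕ} (σ : Equiv.Perm (Fin n)) (i : Fin n) :
    (compPerm σ i).val = n - 1 - (σ i).val := by
  simp [compPerm, Fin.revPerm, Fin.val_rev]; omega

lemma compPerm_lt {n : ℕ} (σ : Equiv.Perm (Fin n)) (i j : Fin n) :
    compPerm σ i < compPerm σ j ↔ σ j < σ i := by
  simp [compPerm, Fin.revPerm]

lemma compPerm_comp {n : ℕ} (σ : Equiv.Perm (Fin n)) : compPerm (compPerm σ) = σ := by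
  ext i
  simp [compPerm, Fin.revPerm]

lemma val_ne_of_ne {n : ℕ} (σ : Equiv.Perm (Fin n)) {i j : Fin n} (h : i ≠ j) :
    (σ i).val ≠ (σ j).val := by
  intro hc
  exact h (σ.injective (Fin.ext hc))

/-- `Desc σ i`: descent at position `i` (0-indexed). -/
def Desc {n : ℕ} (σ : Equiv.Perm (Fin n)) (i : ℕ) : Prop :=
  ∃ h : i + 1 < n, σ ⟨i + 1, h⟩ < σ ⟨i, by omega⟩

lemma desc_val_iff {n : ℕ} {σ : Equiv.Perm (Fin n)} {i : ℕ} (h : i + 1 < n) :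
    Desc σ i ↔ (σ ⟨i + 1, h⟩).val < (σ ⟨i, by omega⟩).val := by
  constructor
  · rintro ⟨h', hl⟩; exact hl
  · intro hl; exact ⟨h, hl⟩

lemma desc_succ_iff {n : ℕ} {σ : Equiv.Perm (Fin n)} (halt : IsAlternating σ)
    {i : ℕ} (h : i + 2 < n) : Desc σ (i+1) ↔ ¬ Desc σ i := by
  have h2 := halt i h
  have hne : (σ ⟨i, by omega⟩).val ≠ (σ ⟨i+1, by omega⟩).val :=
    val_ne_of_ne σ (by simp [Fin.ext_iff])
  rw [desc_val_iff (show (i+1)+1 < n by omega), desc_val_iff (show i+1 < n by omega)]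
  have e : (⟨i+1+1, show (i+1)+1 < n by omega⟩ : Fin n) = ⟨i+2, h⟩ := rfl
  rw [e]
  rw [Fin.lt_def] at h2
  omega

lemma desc_add_iff {n : ℕ} {σ : Equiv.Perm (Fin n)} (halt : IsAlternating σ)
    (i k : ℕ) (h : i + k + 1 < n) :
    Desc σ (i + k) ↔ (Even k ↔ Desc σ i) := by
  induction k with
  | zero => simp
  | succ k ih =>
      have h' : i + k + 1 < n := by omega
      have step : Desc σ ((i+k)+1) ↔ ¬ Desc σ (i+k) := desc_succ_iff halt (by omega)
      have e : i + (k+1) = (i+k)+1 := by omega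
      rw [show i + (k+1) = (i+k)+1 from rfl, step, ih h', Nat.even_add_one]
      tauto


section restrict

variable {p q : ℕ} {σ : Equiv.Perm (Fin (p + q))} {π : Equiv.Perm (Fin p)} {τ : Equiv.Perm (Fin q)}

lemma alt_restrict_left
    (hcmp : ∀ a b : Fin p, σ (Fin.castAdd q a) < σ (Fin.castAdd q b) ↔ π a < π b)
    (halt : IsAlternating σ) : IsAlternating π := by
  intro i h2
  have h2' : i + 2 < p + q := by omega
  have := halt i h2'
  have e0 : (⟨i, by omega⟩ : Fin (p+q)) = Fin.castAdd q ⟨i, by omega⟩ := rfl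
  have e1 : (⟨i+1, by omega⟩ : Fin (p+q)) = Fin.castAdd q ⟨i+1, by omega⟩ := rfl
  have e2 : (⟨i+2, h2'⟩ : Fin (p+q)) = Fin.castAdd q ⟨i+2, h2⟩ := rfl
  rw [e0, e1, e2, hcmp, hcmp] at this
  exact this

lemma alt_restrict_right
    (hcmp : ∀ a b : Fin q, σ (Fin.natAdd p a) < σ (Fin.natAdd p b) ↔ τ a < τ b)
    (halt : IsAlternating σ) : IsAlternating τ := by
  intro i h2
  have h2' : (p + i) + 2 < p + q := by omega
  have := halt (p + i) h2'
  have e0 : (⟨p + i, by omega⟩ : Fin (p+q)) = Fin.natAdd p ⟨i, by omega⟩ := rfl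
  have e1 : (⟨p + i + 1, by omega⟩ : Fin (p+q)) = Fin.natAdd p ⟨i+1, by omega⟩ := by
    simp [Fin.ext_iff]; omega
  have e2 : (⟨p + i + 2, h2'⟩ : Fin (p+q)) = Fin.natAdd p ⟨i+2, h2⟩ := by
    simp [Fin.ext_iff]; omega
  rw [e0, e1, e2, hcmp, hcmp] at this
  exact this

lemma desc_restrict_left
    (hcmp : ∀ a b : Fin p, σ (Fin.castAdd q a) < σ (Fin.castAdd q b) ↔ π a < π b)
    {i : ℕ} (h : i + 1 < p) : (Desc σ i ↔ Desc π i) := by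
  constructor
  · rintro ⟨h', hl⟩
    refine ⟨h, ?_⟩
    have e1 : (⟨i+1, h'⟩ : Fin (p+q)) = Fin.castAdd q ⟨i+1, h⟩ := rfl
    have e0 : (⟨i, by omega⟩ : Fin (p+q)) = Fin.castAdd q ⟨i, by omega⟩ := rfl
    rw [e1, e0, hcmp] at hl
    exact hl
  · rintro ⟨h', hl⟩
    refine ⟨by omega, ?_⟩
    have e1 : (⟨i+1, by omega⟩ : Fin (p+q)) = Fin.castAdd q ⟨i+1, h'⟩ := rfl
    have e0 : (⟨i, by omega⟩ : Fin (p+q)) = Fin.castAdd q ⟨i, by omega⟩ := rfl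
    rw [e1, e0, hcmp]
    exact hl

lemma desc_restrict_right
    (hcmp : ∀ a b : Fin q, σ (Fin.natAdd p a) < σ (Fin.natAdd p b) ↔ τ a < τ b)
    {i : ℕ} (h : i + 1 < q) : (Desc σ (p + i) ↔ Desc τ i) := by
  have e1 : ∀ hh : p + i + 1 < p + q, (⟨p+i+1, hh⟩ : Fin (p+q)) = Fin.natAdd p ⟨i+1, h⟩ := by
    intro hh; simp [Fin.ext_iff]; omega
  have e0 : ∀ hh : p + i < p + q, (⟨p+i, hh⟩ : Fin (p+q)) = Fin.natAdd p ⟨i, by omega⟩ := fun hh => rfl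
  constructor
  · rintro ⟨h', hl⟩
    refine ⟨h, ?_⟩
    rw [e1 h', e0 (by omega), hcmp] at hl
    exact hl
  · rintro ⟨h', hl⟩
    refine ⟨by omega, ?_⟩
    rw [e1 (by omega), e0 (by omega), hcmp]
    exact hl

end restrict


section permextra
variable {p q : ℕ} (π : Equiv.Perm (Fin p)) (τ : Equiv.Perm (Fin q))

variable {p q : ℕ} (π : Equiv.Perm (Fin p)) (τ : Equiv.Perm (Fin q))

lemma dsum_cmp_left (a b : Fin p) :
    permDirectSum π τ (Fin.castAdd q a) < permDirectSum π τ (Fin.castAdd q b) ↔ π a < π b := by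
  rw [dsum_castAdd, dsum_castAdd, Fin.lt_def, Fin.lt_def]
  simp

lemma dsum_cmp_right (a b : Fin q) :
    permDirectSum π τ (Fin.natAdd p a) < permDirectSum π τ (Fin.natAdd p b) ↔ τ a < τ b := by
  rw [dsum_natAdd, dsum_natAdd, Fin.lt_def, Fin.lt_def]
  simp

lemma dsum_cmp_cross (a : Fin p) (b : Fin q) :
    permDirectSum π τ (Fin.castAdd q a) < permDirectSum π τ (Fin.natAdd p b) := by
  rw [dsum_castAdd, dsum_natAdd, Fin.lt_def]
  have := (π a).isLt
  simp; omega

lemma ssum_cmp_left (a b : Fin p) :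
    permSkewSum π τ (Fin.castAdd q a) < permSkewSum π τ (Fin.castAdd q b) ↔ π a < π b := by
  rw [Fin.lt_def, Fin.lt_def, ssum_castAdd, ssum_castAdd]
  omega

lemma ssum_cmp_right (a b : Fin q) :
    permSkewSum π τ (Fin.natAdd p a) < permSkewSum π τ (Fin.natAdd p b) ↔ τ a < τ b := by
  rw [Fin.lt_def, Fin.lt_def, ssum_natAdd, ssum_natAdd]

lemma ssum_cmp_cross (a : Fin p) (b : Fin q) :
    permSkewSum π τ (Fin.natAdd p b) < permSkewSum π τ (Fin.castAdd q a) := by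
  rw [Fin.lt_def, ssum_castAdd, ssum_natAdd]
  have := (τ b).isLt
  omega

lemma comp_dsum : compPerm (permDirectSum π τ) = permSkewSum (compPerm π) (compPerm τ) := by
  apply Equiv.ext; intro i
  induction i using Fin.addCases with
  | left a =>
      apply Fin.ext
      rw [compPerm_val, ssum_castAdd]
      have h1 : (permDirectSum π τ (Fin.castAdd q a)).val = (π a).val := by
        rw [dsum_castAdd]; simp
      rw [h1, compPerm_val]
      have := (π a).isLt
      have := (π.symm a).isLt
      omega
  | right b =>
      apply Fin.ext
      rw [compPerm_val, ssum_natAdd]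
      have h1 : (permDirectSum π τ (Fin.natAdd p b)).val = p + (τ b).val := by
        rw [dsum_natAdd]; simp
      rw [h1, compPerm_val]
      have := (τ b).isLt
      omega

lemma comp_ssum : compPerm (permSkewSum π τ) = permDirectSum (compPerm π) (compPerm τ) := by
  apply Equiv.ext; intro i
  induction i using Fin.addCases with
  | left a =>
      apply Fin.ext
      have h2 : (permDirectSum (compPerm π) (compPerm τ) (Fin.castAdd q a)).val
          = (compPerm π a).val := by rw [dsum_castAdd]; simp
      rw [h2]
      simp only [compPerm_val, ssum_castAdd]
      have := (π a).isLt
      omega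
  | right b =>
      apply Fin.ext
      have h2 : (permDirectSum (compPerm π) (compPerm τ) (Fin.natAdd p b)).val
          = p + (compPerm τ b).val := by rw [dsum_natAdd]; simp
      rw [h2]
      simp only [compPerm_val, ssum_natAdd]
      have := (τ b).isLt
      omega

lemma val_ne_of_ne' {n : ℕ} (σ : Equiv.Perm (Fin n)) {i j : Fin n} (h : i ≠ j) :
    (σ i).val ≠ (σ j).val := fun hc => h (σ.injective (Fin.ext hc))

lemma alt_comp {n : ℕ} {σ : Equiv.Perm (Fin n)} (halt : IsAlternating σ) :
    IsAlternating (compPerm σ) := by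
  intro i h2
  have h := halt i h2
  have hne1 : (σ ⟨i, by omega⟩).val ≠ (σ ⟨i+1, by omega⟩).val :=
    val_ne_of_ne' σ (by simp [Fin.ext_iff])
  have hne2 : (σ ⟨i+2, h2⟩).val ≠ (σ ⟨i+1, by omega⟩).val :=
    val_ne_of_ne' σ (by simp [Fin.ext_iff])
  simp only [Fin.lt_def, compPerm_val] at *
  have := (σ ⟨i, by omega⟩).isLt
  have := (σ ⟨i+1, by omega⟩).isLt
  have := (σ ⟨i+2, h2⟩).isLt
  omega

lemma desc_comp {n : ℕ} {σ : Equiv.Perm (Fin n)} {i : ℕ} (h : i + 1 < n) :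
    (Desc (compPerm σ) i ↔ ¬ Desc σ i) := by
  have hne : (σ ⟨i, by omega⟩).val ≠ (σ ⟨i+1, h⟩).val :=
    val_ne_of_ne' σ (by simp [Fin.ext_iff])
  have h1 := (σ ⟨i, by omega⟩).isLt
  have h2 := (σ ⟨i+1, h⟩).isLt
  constructor
  · rintro ⟨h', hl⟩ ⟨h'', hl2⟩
    rw [Fin.lt_def, compPerm_val, compPerm_val] at hl
    rw [Fin.lt_def] at hl2
    omega
  · intro hnd
    refine ⟨h, ?_⟩
    rw [Fin.lt_def, compPerm_val, compPerm_val]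
    have : ¬ ((σ ⟨i+1, h⟩).val < (σ ⟨i, by omega⟩).val) := fun hc => hnd ⟨h, Fin.lt_def.mpr hc⟩
    omega

lemma sep_pos : ∀ {n : ℕ} {σ : Equiv.Perm (Fin n)}, PermSeparable σ → 0 < n := by
  intro n σ h
  induction h with
  | single => omega
  | dsum h1 h2 ih1 ih2 => omega
  | ssum h1 h2 ih1 ih2 => omega

end permextra

open intervalIntegral MeasureTheory

noncomputable def Pfun {n : ℕ} (c : Fin n → ℝ) (t : ℝ) : ℝ := ∏ ℓ, (t - c ℓ)

lemma contPfun {n : ℕ} (c : Fin n → ℝ) : Continuous (Pfun c) := by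
  unfold Pfun
  exact continuous_finset_prod _ (fun i _ => continuous_id.sub continuous_const)

lemma intgPfun {n : ℕ} (c : Fin n → ℝ) (a b : ℝ) :
    IntervalIntegrable (Pfun c) volume a b := (contPfun c).intervalIntegrable _ _

section helpers

lemma abs_prod_le {n : ℕ} (f : Fin n → ℝ) (C : ℝ) (h : ∀ i, |f i| ≤ C) :
    |∏ i, f i| ≤ C ^ n := by
  rw [Finset.abs_prod]
  calc ∏ i, |f i| ≤ ∏ _i : Fin n, C :=
        Finset.prod_le_prod (fun i _ => abs_nonneg _) (fun i _ => h i)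
    _ = C ^ n := by rw [Finset.prod_const, Finset.card_univ, Fintype.card_fin]

lemma pow_le_prod {n : ℕ} (f : Fin n → ℝ) (c : ℝ) (hc : 0 ≤ c) (h : ∀ i, c ≤ f i) :
    c ^ n ≤ ∏ i, f i := by
  calc c ^ n = ∏ _i : Fin n, c := by rw [Finset.prod_const, Finset.card_univ, Fintype.card_fin]
    _ ≤ ∏ i, f i := Finset.prod_le_prod (fun i _ => hc) (fun i _ => h i)

lemma prod_le_pow' {n : ℕ} (f : Fin n → ℝ) (C : ℝ) (h0 : ∀ i, 0 ≤ f i) (h : ∀ i, f i ≤ C) :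
    ∏ i, f i ≤ C ^ n := by
  calc ∏ i, f i ≤ ∏ _i : Fin n, C := Finset.prod_le_prod (fun i _ => h0 i) (fun i _ => h i)
    _ = C ^ n := by rw [Finset.prod_const, Finset.card_univ, Fintype.card_fin]

lemma prod_nonneg' {n : ℕ} (f : Fin n → ℝ) (h0 : ∀ i, 0 ≤ f i) : 0 ≤ ∏ i, f i :=
  Finset.prod_nonneg (fun i _ => h0 i)

lemma pow_sub_pow_le' {x y : ℝ} (hy : 0 ≤ y) (hxy : y ≤ x) (n : ℕ) :
    x ^ (n+1) - y ^ (n+1) ≤ (n+1) * (x - y) * x ^ n := by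
  induction n with
  | zero => simp
  | succ n ih =>
      have hx : 0 ≤ x := le_trans hy hxy
      have h1 : y ^ (n+1) ≤ x ^ (n+1) := pow_le_pow_left₀ hy hxy (n+1)
      have e2 : x * (x^(n+1) - y^(n+1)) ≤ x * ((n+1) * (x-y) * x ^ n) :=
        mul_le_mul_of_nonneg_left ih hx
      have e3 : (x - y) * y ^ (n+1) ≤ (x - y) * x ^ (n+1) :=
        mul_le_mul_of_nonneg_left h1 (by linarith)
      push_cast at e2 ⊢
      calc x ^ (n+1+1) - y ^ (n+1+1)
          = x * (x^(n+1) - y^(n+1)) + (x - y) * y^(n+1) := by ring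
        _ ≤ x * (((n:ℝ)+1) * (x-y) * x ^ n) + (x - y) * x^(n+1) := add_le_add e2 e3
        _ = ((n:ℝ)+1+1) * (x - y) * x ^ (n+1) := by ring

lemma Pfun_sign {q : ℕ} (d : Fin q → ℝ) (t : ℝ) :
    Pfun d t = (-1:ℝ)^q * ∏ j, (d j - t) := by
  unfold Pfun
  calc ∏ j, (t - d j) = ∏ j, ((-1) * (d j - t)) := Finset.prod_congr rfl (fun j _ => by ring)
    _ = (∏ _j : Fin q, (-1:ℝ)) * ∏ j, (d j - t) := Finset.prod_mul_distrib
    _ = (-1:ℝ)^q * ∏ j, (d j - t) := by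
        rw [Finset.prod_const, Finset.card_univ, Fintype.card_fin]

lemma neg_one_pow_sq (q : ℕ) : (-1:ℝ)^q * (-1)^q = 1 := by
  rw [← pow_add]
  exact Even.neg_one_pow ⟨q, rfl⟩

lemma ineq3 {p q : ℕ} (hp : 0 < p) (hq : 0 < q) {Dm B : ℝ} (hDm1 : 1 ≤ Dm)
    (hB : 4^(p+q+2) * (2^(p+1) + Dm^(q+1)) + 4*Dm + 100 ≤ B) :
    2^(p+1) * (B + Dm + 1)^q + Dm^(q+1) * (B + Dm + 1)^p < (B/2 - 2)^(p+q) := by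
  set x : ℝ := B + Dm + 1 with hx
  have h2p : (0:ℝ) < 2^(p+1) := by positivity
  have hDq : (0:ℝ) < Dm^(q+1) := by positivity
  have h4N : (0:ℝ) < 4^(p+q) := by positivity
  have hBbig : 4*Dm + 100 ≤ B := by nlinarith [h2p, hDq, pow_pos (by norm_num : (0:ℝ) < 4) (p+q+2)]
  have hx1 : 1 ≤ x := by simp only [hx]; linarith
  have hx16 : 16 * 4^(p+q) * (2^(p+1) + Dm^(q+1)) ≤ x := by
    have h16 : (4:ℝ)^(p+q+2) = 4^(p+q) * 16 := by rw [pow_add]; norm_num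
    simp only [hx]
    nlinarith [hB, h16]
  have hxp : x ≤ x^p := le_self_pow₀ hx1 (by omega)
  have hxq : x ≤ x^q := le_self_pow₀ hx1 (by omega)
  have hxppos : (0:ℝ) < x^p := pow_pos (by linarith) _
  have hxqpos : (0:ℝ) < x^q := pow_pos (by linarith) _
  have key1 : x * x^q ≤ x^p * x^q := mul_le_mul_of_nonneg_right hxp (le_of_lt hxqpos)
  have key2 : x * x^p ≤ x^p * x^q := by nlinarith [hxq, hxppos]
  have hfin : 4^(p+q) * (2^(p+1) * x^q + Dm^(q+1) * x^p) < x^(p+q) := by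
    have hS1 : 4^(p+q) * 2^(p+1) * x^q ≤ (x/16) * x^q := by
      have : 4^(p+q) * 2^(p+1) ≤ x/16 := by nlinarith [hx16, hDq, h4N]
      nlinarith [hxqpos]
    have hS2 : 4^(p+q) * Dm^(q+1) * x^p ≤ (x/16) * x^p := by
      have : 4^(p+q) * Dm^(q+1) ≤ x/16 := by nlinarith [hx16, h2p, h4N]
      nlinarith [hxppos]
    have hxx : x^(p+q) = x^p * x^q := pow_add x p q
    nlinarith [key1, key2, hxppos, hxqpos]
  have h4 : x/4 ≤ B/2 - 2 := by simp only [hx]; linarith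
  have hpow : (x/4)^(p+q) ≤ (B/2 - 2)^(p+q) := pow_le_pow_left₀ (by positivity) h4 _
  have hdiv : (x/4)^(p+q) = x^(p+q)/4^(p+q) := div_pow _ _ _
  have : 2^(p+1) * x^q + Dm^(q+1) * x^p < x^(p+q)/4^(p+q) := by
    rw [lt_div_iff₀ h4N]
    nlinarith [hfin]
  calc 2^(p+1) * x^q + Dm^(q+1) * x^p < x^(p+q)/4^(p+q) := this
    _ = (x/4)^(p+q) := hdiv.symm
    _ ≤ (B/2 - 2)^(p+q) := hpow

end helpers

section estimates

variable {p q : ℕ} (e : Fin p → ℝ) (d : Fin q → ℝ) (A ε E Dm : ℝ)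

/-- T1: the far-away cluster does not change signs of integrals between the `d`-roots. -/
lemma estT1 (hp : 0 < p)
    (hE1 : 1 ≤ E) (hEe : ∀ i, |e i| ≤ E) (hd0 : ∀ j, 0 ≤ d j) (hdD : ∀ j, d j ≤ Dm)
    (hDm1 : 1 ≤ Dm) (hε : 0 < ε) (hεE : ε * E ≤ 1) (a b : Fin q)
    (hA1 : A ≤ -(Dm + 3))
    (hA2 : 2 ^ p * p * (Dm + 2) * Dm ^ (q+1) < (-A) * |∫ t in d a..d b, Pfun d t|) :
    ((0 < ∫ t in d a..d b, (∏ i : Fin p, (t - (ε * e i + A))) * Pfun d t) ↔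
      0 < ∫ t in d a..d b, Pfun d t) := by
  obtain ⟨p', rfl⟩ : ∃ p', p = p' + 1 := ⟨p-1, by omega⟩
  set W : ℝ → ℝ := fun t => ∏ i : Fin (p'+1), (t - (ε * e i + A)) with hWdef
  set g : ℝ := ∫ t in d a..d b, Pfun d t with hg
  set B : ℝ := -A with hB
  have hAB : A = -B := by rw [hB]; ring
  have hB4 : Dm + 3 ≤ B := by rw [hB]; linarith
  have hεe : ∀ i, |ε * e i| ≤ 1 := by
    intro i
    rw [abs_mul, abs_of_pos hε]
    calc ε * |e i| ≤ ε * E := by nlinarith [hEe i, abs_nonneg (e i)]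
      _ ≤ 1 := hεE
  have hWcont : Continuous W :=
    continuous_finset_prod _ (fun i _ => continuous_id.sub continuous_const)
  have hrange : ∀ t ∈ Set.uIoc (d a) (d b), 0 ≤ t ∧ t ≤ Dm := by
    intro t ht
    rcases Set.mem_uIoc.mp ht with ⟨h1, h2⟩ | ⟨h1, h2⟩
    · exact ⟨le_trans (hd0 a) h1.le, le_trans h2 (hdD b)⟩
    · exact ⟨le_trans (hd0 b) h1.le, le_trans h2 (hdD a)⟩
  have hWlo : ∀ t, 0 ≤ t → t ≤ Dm → (B - 1)^(p'+1) ≤ W t := by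
    intro t h0 h1
    simp only [hWdef]
    apply pow_le_prod _ _ (by linarith)
    intro i
    have h2 := (abs_le.mp (hεe i)).2
    linarith [hAB]
  have hWhi : ∀ t, 0 ≤ t → t ≤ Dm → W t ≤ (B + Dm + 1)^(p'+1) := by
    intro t h0 h1
    simp only [hWdef]
    apply prod_le_pow'
    · intro i
      have h2 := (abs_le.mp (hεe i)).2
      linarith [hAB]
    · intro i
      have h2 := (abs_le.mp (hεe i)).1
      linarith [hAB]
  have hVbd : ∀ t, 0 ≤ t → t ≤ Dm → |Pfun d t| ≤ Dm ^ q := by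
    intro t h0 h1
    apply abs_prod_le
    intro j
    rw [abs_le]
    refine ⟨?_, ?_⟩
    · have := hdD j; linarith
    · have := hd0 j; linarith
  set I : ℝ := ∫ t in d a..d b, W t * Pfun d t with hI
  have hint1 : IntervalIntegrable (fun t => W t * Pfun d t) volume (d a) (d b) :=
    (hWcont.mul (contPfun d)).intervalIntegrable _ _
  have hint2 : IntervalIntegrable (fun t => ((B-1)^(p'+1) : ℝ) * Pfun d t) volume (d a) (d b) :=
    (continuous_const.mul (contPfun d)).intervalIntegrable _ _
  have hsplit : I - (B-1)^(p'+1) * g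
      = ∫ t in d a..d b, (W t - (B-1)^(p'+1)) * Pfun d t := by
    rw [hI, hg, ← intervalIntegral.integral_const_mul, ← integral_sub hint1 hint2]
    congr 1
    ext t
    ring
  have hRbd : |I - (B-1)^(p'+1) * g|
      ≤ ((B + Dm + 1)^(p'+1) - (B-1)^(p'+1)) * Dm ^ q * Dm := by
    rw [hsplit]
    have habs : ∀ t ∈ Set.uIoc (d a) (d b),
        ‖(W t - (B-1)^(p'+1)) * Pfun d t‖ ≤ ((B + Dm + 1)^(p'+1) - (B-1)^(p'+1)) * Dm ^ q := by
      intro t ht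
      obtain ⟨h0, h1⟩ := hrange t ht
      rw [Real.norm_eq_abs, abs_mul]
      have hw1 := hWlo t h0 h1
      have hw2 := hWhi t h0 h1
      have hv := hVbd t h0 h1
      have h3 : |W t - (B-1)^(p'+1)| ≤ (B + Dm + 1)^(p'+1) - (B-1)^(p'+1) := by
        rw [abs_of_nonneg (by linarith)]
        linarith
      apply mul_le_mul h3 hv (abs_nonneg _)
      linarith [pow_le_pow_left₀ (show (0:ℝ) ≤ B - 1 by linarith)
        (show B - 1 ≤ B + Dm + 1 by linarith) (p'+1)]
    have hnorm := intervalIntegral.norm_integral_le_of_norm_le_const habs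
    rw [Real.norm_eq_abs] at hnorm
    apply le_trans hnorm
    have hdd : |d b - d a| ≤ Dm := by
      rw [abs_le]
      refine ⟨?_, ?_⟩
      · have := hd0 b; have := hdD a; linarith
      · have := hd0 a; have := hdD b; linarith
    have hnn : 0 ≤ ((B + Dm + 1)^(p'+1) - (B-1)^(p'+1)) * Dm ^ q := by
      have h1 : (B-1)^(p'+1) ≤ (B + Dm + 1)^(p'+1) :=
        pow_le_pow_left₀ (by linarith) (by linarith) _
      have h2 : (0:ℝ) ≤ Dm ^ q := pow_nonneg (by linarith) _
      nlinarith
    nlinarith [abs_nonneg (d b - d a)]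
  have hkey : |I - (B-1)^(p'+1) * g| < (B-1)^(p'+1) * |g| := by
    apply lt_of_le_of_lt hRbd
    have hX : (0:ℝ) < (B+Dm+1)^p' := pow_pos (by linarith) _
    have hgnn : (0:ℝ) ≤ |g| := abs_nonneg g
    have hΔ : (B + Dm + 1)^(p'+1) - (B-1)^(p'+1) ≤ ((p':ℝ)+1) * (Dm + 2) * (B+Dm+1)^p' := by
      have h := pow_sub_pow_le' (x := B + Dm + 1) (y := B - 1) (by linarith) (by linarith) p'
      calc (B + Dm + 1)^(p'+1) - (B-1)^(p'+1)
          ≤ ((p':ℝ)+1) * ((B + Dm + 1) - (B-1)) * (B+Dm+1)^p' := h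
        _ = ((p':ℝ)+1) * (Dm + 2) * (B+Dm+1)^p' := by ring
    have hW0 : (B+Dm+1)^p' * B / 2^(p'+1) ≤ (B-1)^(p'+1) := by
      have h1 : (B + Dm + 1) / 2 ≤ B - 1 := by linarith
      have h2 : ((B + Dm + 1)/2)^(p'+1) ≤ (B-1)^(p'+1) :=
        pow_le_pow_left₀ (by linarith) h1 _
      have h3 : ((B + Dm + 1)/2)^(p'+1) = (B+Dm+1)^(p'+1) / 2^(p'+1) := div_pow _ _ _
      have h4 : (B+Dm+1)^p' * B ≤ (B+Dm+1)^(p'+1) := by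
        rw [pow_succ]
        nlinarith [hX]
      have h5 : (0:ℝ) < 2^(p'+1) := by positivity
      rw [h3] at h2
      calc (B+Dm+1)^p' * B / 2^(p'+1) ≤ (B+Dm+1)^(p'+1) / 2^(p'+1) :=
            div_le_div_of_nonneg_right h4 h5.le
        _ ≤ (B-1)^(p'+1) := h2
    -- numeric: ΔW * Dm^q * Dm ≤ (p'+1)(Dm+2) X Dm^{q+1} < X*B/2^{p+1} * |g| ≤ W0 |g|
    have hDmq : (0:ℝ) < Dm^(q+1) := by positivity
    have hA2' : 2 ^ (p'+1) * ((p':ℝ)+1) * (Dm + 2) * Dm ^ (q+1) < B * |g| := by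
      push_cast at hA2
      linarith [hA2]
    have step1 : ((B + Dm + 1)^(p'+1) - (B-1)^(p'+1)) * Dm^q * Dm
        ≤ (((p':ℝ)+1) * (Dm + 2) * Dm^(q+1)) * (B+Dm+1)^p' := by
      have hDmqq : Dm^q * Dm = Dm^(q+1) := (pow_succ Dm q).symm
      have hDnn : (0:ℝ) ≤ Dm^q * Dm := by positivity
      have hmul := mul_le_mul_of_nonneg_right hΔ hDnn
      calc ((B + Dm + 1)^(p'+1) - (B-1)^(p'+1)) * Dm^q * Dm
          = ((B + Dm + 1)^(p'+1) - (B-1)^(p'+1)) * (Dm^q * Dm) := by ring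
        _ ≤ (((p':ℝ)+1) * (Dm + 2) * (B+Dm+1)^p') * (Dm^q * Dm) := hmul
        _ = (((p':ℝ)+1) * (Dm + 2) * Dm^(q+1)) * (B+Dm+1)^p' := by rw [hDmqq]; ring
    have step2 : (((p':ℝ)+1) * (Dm + 2) * Dm^(q+1)) * (B+Dm+1)^p'
        < ((B+Dm+1)^p' * B / 2^(p'+1)) * |g| := by
      have h5 : (0:ℝ) < 2^(p'+1) := by positivity
      rw [div_mul_eq_mul_div, lt_div_iff₀ h5]
      calc (((p':ℝ)+1) * (Dm + 2) * Dm^(q+1)) * (B+Dm+1)^p' * 2^(p'+1)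
          = (2 ^ (p'+1) * ((p':ℝ)+1) * (Dm + 2) * Dm ^ (q+1)) * (B+Dm+1)^p' := by ring
        _ < (B * |g|) * (B+Dm+1)^p' := by
            apply mul_lt_mul_of_pos_right hA2' hX
        _ = (B+Dm+1)^p' * B * |g| := by ring
    have step3 : ((B+Dm+1)^p' * B / 2^(p'+1)) * |g| ≤ (B-1)^(p'+1) * |g| :=
      mul_le_mul_of_nonneg_right hW0 hgnn
    exact lt_of_le_of_lt step1 (lt_of_lt_of_le step2 step3)
  have hW0pos : (0:ℝ) < (B-1)^(p'+1) := pow_pos (by linarith) _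
  constructor
  · intro hIpos
    by_contra hgle
    push_neg at hgle
    have hgabs : |g| = -g := abs_of_nonpos hgle
    have h := abs_lt.mp hkey
    nlinarith [h.1, h.2]
  · intro hg0
    have hgabs : |g| = g := abs_of_pos hg0
    have h := abs_lt.mp hkey
    nlinarith [h.1, h.2]

end estimates


section est23

variable {p q : ℕ} (e : Fin p → ℝ) (d : Fin q → ℝ) (A ε E Dm : ℝ)

/-- T2: within-cluster comparisons. -/
lemma estT2 (hE1 : 1 ≤ E) (hEe : ∀ i, |e i| ≤ E) (hε : 0 < ε) (a b : Fin p) (δ : ℝ)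
    (hδ : ∀ s : ℝ, |s| ≤ E → |Pfun d (ε * s + A) - Pfun d A| ≤ δ)
    (hdA : ∀ j, 0 ≤ d j - A)
    (hsmall : (2*E)^p * (2*E) * δ < (∏ j, (d j - A)) * |∫ s in e a..e b, Pfun e s|) :
    ((0 < (-1:ℝ)^q * ∫ t in (ε * e a + A)..(ε * e b + A),
        (∏ i : Fin p, (t - (ε * e i + A))) * Pfun d t) ↔
      0 < ∫ s in e a..e b, Pfun e s) := by
  set Je : ℝ := ∫ s in e a..e b, Pfun e s with hJe
  set TA : ℝ := ∏ j, (d j - A) with hTA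
  have hTAnn : 0 ≤ TA := prod_nonneg' _ hdA
  have hδnn : 0 ≤ δ := le_trans (abs_nonneg _) (hδ 0 (by rw [abs_zero]; linarith))
  have hE0 : (0:ℝ) < E := by linarith
  have h2E : (0:ℝ) < (2*E)^p * (2*E) := by positivity
  set W : ℝ → ℝ := fun t => ∏ i : Fin p, (t - (ε * e i + A)) with hWdef
  have hWcont : Continuous W :=
    continuous_finset_prod _ (fun i _ => continuous_id.sub continuous_const)
  set I : ℝ := ∫ t in (ε * e a + A)..(ε * e b + A), W t * Pfun d t with hIdef
  -- substitution
  have hsubs := integral_comp_mul_add (a := e a) (b := e b)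
      (fun t => W t * Pfun d t) (ne_of_gt hε) A
  have hIeq : I = ε * ∫ s in e a..e b, W (ε * s + A) * Pfun d (ε * s + A) := by
    have h2 : (∫ s in e a..e b, W (ε*s+A) * Pfun d (ε*s+A))
        = ε⁻¹ • ∫ t in (ε * e a + A)..(ε * e b + A), W t * Pfun d t := by
      simpa using hsubs
    rw [hIdef, h2, smul_eq_mul, ← mul_assoc, mul_inv_cancel₀ (ne_of_gt hε), one_mul]
  -- pointwise identification of W on the cluster
  have hptw : ∀ s : ℝ, W (ε * s + A) = ε^p * Pfun e s := by
    intro s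
    simp only [hWdef, Pfun]
    calc ∏ i : Fin p, (ε * s + A - (ε * e i + A))
        = ∏ i : Fin p, (ε * (s - e i)) := Finset.prod_congr rfl (fun i _ => by ring)
      _ = (∏ _i : Fin p, ε) * ∏ i, (s - e i) := Finset.prod_mul_distrib
      _ = ε^p * ∏ i, (s - e i) := by rw [Finset.prod_const, Finset.card_univ, Fintype.card_fin]
  set R : ℝ := ∫ s in e a..e b, Pfun e s * (Pfun d (ε * s + A) - Pfun d A) with hR
  have hcont1 : Continuous fun s => Pfun e s * Pfun d (ε * s + A) := by
    apply (contPfun e).mul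
    exact (contPfun d).comp (by fun_prop)
  have hinner : (∫ s in e a..e b, W (ε * s + A) * Pfun d (ε * s + A))
      = ε^p * (Je * Pfun d A + R) := by
    calc (∫ s in e a..e b, W (ε * s + A) * Pfun d (ε * s + A))
        = ∫ s in e a..e b, ε^p * (Pfun e s * Pfun d (ε * s + A)) := by
          apply integral_congr
          intro s _
          show W (ε * s + A) * Pfun d (ε * s + A) = ε ^ p * (Pfun e s * Pfun d (ε * s + A))
          rw [hptw s]; ring
      _ = ε^p * ∫ s in e a..e b, Pfun e s * Pfun d (ε * s + A) := integral_const_mul _ _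
      _ = ε^p * (Je * Pfun d A + R) := by
          congr 1
          have hint1 : IntervalIntegrable (fun x : ℝ => Pfun e x * Pfun d A)
              volume (e a) (e b) :=
            ((contPfun e).mul continuous_const).intervalIntegrable _ _
          have hint2 : IntervalIntegrable
              (fun s : ℝ => Pfun e s * (Pfun d (ε * s + A) - Pfun d A))
              volume (e a) (e b) :=
            Continuous.intervalIntegrable
              (((contPfun e).mul (((contPfun d).comp
                ((continuous_const.mul continuous_id).add continuous_const)).sub
                continuous_const)) :
                Continuous fun s : ℝ => Pfun e s * (Pfun d (ε * s + A) - Pfun d A)) _ _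
          rw [hJe, hR, ← intervalIntegral.integral_mul_const, ← integral_add hint1 hint2]
          apply integral_congr
          intro s _
          show Pfun e s * Pfun d (ε * s + A)
            = Pfun e s * Pfun d A + Pfun e s * (Pfun d (ε * s + A) - Pfun d A)
          ring
  have hRbd : |R| ≤ (2*E)^p * δ * (2*E) := by
    have habs : ∀ s ∈ Set.uIoc (e a) (e b),
        ‖Pfun e s * (Pfun d (ε * s + A) - Pfun d A)‖ ≤ (2*E)^p * δ := by
      intro s hs
      have hsE : |s| ≤ E := by
        have ha := abs_le.mp (hEe a)
        have hb := abs_le.mp (hEe b)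
        rcases Set.mem_uIoc.mp hs with ⟨h1, h2⟩ | ⟨h1, h2⟩ <;>
          (rw [abs_le]; constructor <;> linarith)
      rw [Real.norm_eq_abs, abs_mul]
      have h1 : |Pfun e s| ≤ (2*E)^p := by
        unfold Pfun
        apply abs_prod_le
        intro i
        have := abs_le.mp (hEe i)
        have := abs_le.mp hsE
        rw [abs_le]; constructor <;> linarith
      exact mul_le_mul h1 (hδ s hsE) (abs_nonneg _) (by positivity)
    have hnorm := intervalIntegral.norm_integral_le_of_norm_le_const habs
    rw [Real.norm_eq_abs] at hnorm
    apply le_trans hnorm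
    have hle : |e b - e a| ≤ 2*E := by
      have ha := abs_le.mp (hEe a)
      have hb := abs_le.mp (hEe b)
      rw [abs_le]; constructor <;> linarith
    have hC : 0 ≤ (2*E)^p * δ := mul_nonneg (by positivity) hδnn
    exact mul_le_mul_of_nonneg_left hle hC
  -- sign of Pfun d A
  have hVA : Pfun d A = (-1:ℝ)^q * TA := Pfun_sign d A
  have hsq := neg_one_pow_sq q
  have hfinal : (-1:ℝ)^q * I = ε^(p+1) * (TA * Je + (-1:ℝ)^q * R) := by
    rw [hIeq, hinner, hVA]
    have hpp : ε^(p+1) = ε * ε^p := by ring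
    linear_combination (ε^(p+1) * Je * TA) * hsq
  have hrlt : |(-1:ℝ)^q * R| < TA * |Je| := by
    have : |(-1:ℝ)^q * R| = |R| := by
      rw [abs_mul, abs_pow, abs_neg, abs_one, one_pow, one_mul]
    rw [this]
    calc |R| ≤ (2*E)^p * δ * (2*E) := hRbd
      _ = (2*E)^p * (2*E) * δ := by ring
      _ < TA * |Je| := hsmall
  have hεp : (0:ℝ) < ε^(p+1) := pow_pos hε _
  have habs := abs_lt.mp hrlt
  constructor
  · intro hIpos
    by_contra hle
    push_neg at hle
    have : |Je| = -Je := abs_of_nonpos hle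
    rw [this] at habs
    nlinarith [hfinal, habs.1, habs.2, hTAnn]
  · intro hpos
    have : |Je| = Je := abs_of_pos hpos
    rw [this] at habs
    nlinarith [hfinal, habs.1, habs.2, hTAnn]

/-- T3: cluster values vs `d`-block values. -/
lemma estT3 (hp : 0 < p) (hE1 : 1 ≤ E) (hEe : ∀ i, |e i| ≤ E) (hd0 : ∀ j, 0 ≤ d j)
    (hdD : ∀ j, d j ≤ Dm) (hDm1 : 1 ≤ Dm) (hε : 0 < ε) (hεE : ε * E ≤ 1)
    (a : Fin p) (b : Fin q) (hA1 : A ≤ -(Dm + 9))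
    (hA3 : 2^(p+1) * (-A + Dm + 1)^q + Dm^(q+1) * (-A + Dm + 1)^p < (-A/2 - 2)^(p+q)) :
    0 < (-1:ℝ)^q * ∫ t in (ε * e a + A)..(d b),
        (∏ i : Fin p, (t - (ε * e i + A))) * Pfun d t := by
  set W : ℝ → ℝ := fun t => ∏ i : Fin p, (t - (ε * e i + A)) with hWdef
  set Vt : ℝ → ℝ := fun t => ∏ j, (d j - t) with hVtdef
  have hWcont : Continuous W :=
    continuous_finset_prod _ (fun i _ => continuous_id.sub continuous_const)
  have hVtcont : Continuous Vt :=
    continuous_finset_prod _ (fun i _ => continuous_const.sub continuous_id)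
  have hεe : ∀ i, |ε * e i| ≤ 1 := by
    intro i
    rw [abs_mul, abs_of_pos hε]
    calc ε * |e i| ≤ ε * E := by nlinarith [hEe i, abs_nonneg (e i)]
      _ ≤ 1 := hεE
  have hsq := neg_one_pow_sq q
  have hflip : (-1:ℝ)^q * (∫ t in (ε*e a+A)..(d b), W t * Pfun d t)
      = ∫ t in (ε*e a+A)..(d b), W t * Vt t := by
    rw [← intervalIntegral.integral_const_mul]
    apply integral_congr
    intro t _
    show (-1:ℝ)^q * (W t * Pfun d t) = W t * Vt t
    rw [Pfun_sign d t]
    simp only [hVtdef]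
    linear_combination (W t * ∏ j, (d j - t)) * hsq
  rw [hflip]
  -- integrability
  have hintWV : ∀ x y : ℝ, IntervalIntegrable (fun t => W t * Vt t) volume x y :=
    fun x y => (hWcont.mul hVtcont).intervalIntegrable _ _
  -- split
  have hsplit1 := integral_add_adjacent_intervals (hintWV (ε*e a+A) (A+1)) (hintWV (A+1) (d b))
  have hsplit2 := integral_add_adjacent_intervals (hintWV (A+1) 0) (hintWV 0 (d b))
  have hsplit3 := integral_add_adjacent_intervals (hintWV (A+1) (A/2-1)) (hintWV (A/2-1) 0)
  have hsplit4 := integral_add_adjacent_intervals (hintWV (A/2-1) (A/2)) (hintWV (A/2) 0)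
  -- bounds: G1
  have hG1 : |∫ t in (ε*e a+A)..(A+1), W t * Vt t| ≤ 2^(p+1) * (-A + Dm + 1)^q := by
    have habs : ∀ t ∈ Set.uIoc (ε*e a+A) (A+1), ‖W t * Vt t‖ ≤ 2^p * (-A + Dm + 1)^q := by
      intro t ht
      have hta : A - 1 ≤ t ∧ t ≤ A + 1 := by
        have h1 := (abs_le.mp (hεe a)).1
        have h2 := (abs_le.mp (hεe a)).2
        rcases Set.mem_uIoc.mp ht with ⟨u1, u2⟩ | ⟨u1, u2⟩ <;> constructor <;> linarith
      rw [Real.norm_eq_abs, abs_mul]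
      have h1 : |W t| ≤ 2^p := by
        simp only [hWdef]
        apply abs_prod_le
        intro i
        have h3 := (abs_le.mp (hεe i)).1
        have h4 := (abs_le.mp (hεe i)).2
        rw [abs_le]; constructor <;> linarith [hta.1, hta.2]
      have h2 : |Vt t| ≤ (-A + Dm + 1)^q := by
        simp only [hVtdef]
        apply abs_prod_le
        intro j
        have := hd0 j
        have := hdD j
        rw [abs_le]; constructor <;> [linarith [hta.1]; linarith [hta.2, hta.1]]
      exact mul_le_mul h1 h2 (abs_nonneg _) (by positivity)
    have hnorm := intervalIntegral.norm_integral_le_of_norm_le_const habs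
    rw [Real.norm_eq_abs] at hnorm
    apply le_trans hnorm
    have hlen : |A + 1 - (ε*e a+A)| ≤ 2 := by
      have h1 := (abs_le.mp (hεe a)).1
      have h2 := (abs_le.mp (hεe a)).2
      rw [abs_le]; constructor <;> linarith
    have hC : (0:ℝ) ≤ 2^p * (-A + Dm + 1)^q := by
      have h9 : (0:ℝ) ≤ -A + Dm + 1 := by linarith
      exact mul_nonneg (by positivity) (pow_nonneg h9 _)
    calc 2^p * (-A + Dm + 1)^q * |A + 1 - (ε*e a+A)| ≤ 2^p * (-A + Dm + 1)^q * 2 := by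
          nlinarith
      _ = 2^(p+1) * (-A + Dm + 1)^q := by ring
  -- G3
  have hG3 : |∫ t in (0:ℝ)..(d b), W t * Vt t| ≤ Dm^(q+1) * (-A + Dm + 1)^p := by
    have habs : ∀ t ∈ Set.uIoc (0:ℝ) (d b), ‖W t * Vt t‖ ≤ (-A + Dm + 1)^p * Dm^q := by
      intro t ht
      have hta : 0 ≤ t ∧ t ≤ Dm := by
        rcases Set.mem_uIoc.mp ht with ⟨u1, u2⟩ | ⟨u1, u2⟩
        · exact ⟨u1.le, le_trans u2 (hdD b)⟩
        · exact ⟨le_trans (hd0 b) u1.le, le_trans u2 (by linarith)⟩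
      rw [Real.norm_eq_abs, abs_mul]
      have h1 : |W t| ≤ (-A + Dm + 1)^p := by
        simp only [hWdef]
        apply abs_prod_le
        intro i
        have h3 := (abs_le.mp (hεe i)).1
        have h4 := (abs_le.mp (hεe i)).2
        rw [abs_le]; constructor <;> [linarith [hta.1]; linarith [hta.2]]
      have h2 : |Vt t| ≤ Dm^q := by
        simp only [hVtdef]
        apply abs_prod_le
        intro j
        have := hd0 j
        have := hdD j
        rw [abs_le]; constructor <;> linarith [hta.1, hta.2]
      exact mul_le_mul h1 h2 (abs_nonneg _) (pow_nonneg (by linarith) _)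
    have hnorm := intervalIntegral.norm_integral_le_of_norm_le_const habs
    rw [Real.norm_eq_abs] at hnorm
    apply le_trans hnorm
    have hlen : |d b - 0| ≤ Dm := by
      rw [abs_le]
      constructor <;> [linarith [hd0 b]; linarith [hdD b]]
    have hC : (0:ℝ) ≤ (-A + Dm + 1)^p * Dm^q := by
      have h9 : (0:ℝ) ≤ -A + Dm + 1 := by linarith
      exact mul_nonneg (pow_nonneg h9 _) (by positivity)
    calc (-A + Dm + 1)^p * Dm^q * |d b - 0| ≤ (-A + Dm + 1)^p * Dm^q * Dm := by nlinarith
      _ = Dm^(q+1) * (-A + Dm + 1)^p := by ring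
  -- middle positivity
  have hmidnn : ∀ t, A + 1 ≤ t → t ≤ 0 → 0 ≤ W t * Vt t := by
    intro t h1 h2
    apply mul_nonneg
    · simp only [hWdef]
      apply prod_nonneg'
      intro i
      have := (abs_le.mp (hεe i)).2
      linarith
    · simp only [hVtdef]
      apply prod_nonneg'
      intro j
      have := hd0 j
      linarith
  have hm1 : 0 ≤ ∫ t in (A+1)..(A/2-1), W t * Vt t := by
    apply intervalIntegral.integral_nonneg (by linarith)
    intro u hu
    exact hmidnn u hu.1 (by linarith [hu.2])
  have hm3 : 0 ≤ ∫ t in (A/2)..(0:ℝ), W t * Vt t := by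
    apply intervalIntegral.integral_nonneg (by linarith)
    intro u hu
    exact hmidnn u (by linarith [hu.1]) hu.2
  have hm2 : (-A/2 - 2)^(p+q) ≤ ∫ t in (A/2-1)..(A/2), W t * Vt t := by
    have hc : (0:ℝ) ≤ -A/2 - 2 := by linarith
    have hlow : ∀ t ∈ Set.Icc (A/2-1) (A/2), (-A/2 - 2)^(p+q) ≤ W t * Vt t := by
      intro t ht
      obtain ⟨h1, h2⟩ := ht
      have hW : (-A/2 - 2)^p ≤ W t := by
        simp only [hWdef]
        apply pow_le_prod _ _ hc
        intro i
        have := (abs_le.mp (hεe i)).2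
        linarith
      have hV : (-A/2 - 2)^q ≤ Vt t := by
        simp only [hVtdef]
        apply pow_le_prod _ _ hc
        intro j
        have := hd0 j
        linarith
      calc (-A/2 - 2)^(p+q) = (-A/2 - 2)^p * (-A/2 - 2)^q := pow_add _ _ _
        _ ≤ W t * Vt t := by
            apply mul_le_mul hW hV (pow_nonneg hc _)
            exact le_trans (pow_nonneg hc _) hW
    have hmono := intervalIntegral.integral_mono_on (by linarith : A/2 - 1 ≤ A/2)
      (intervalIntegrable_const) (hintWV _ _) hlow
    rw [intervalIntegral.integral_const] at hmono
    have : (A/2 - (A/2 - 1)) • (-A/2 - 2)^(p+q) = (-A/2 - 2)^(p+q) := by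
      rw [smul_eq_mul]; ring_nf
    rw [this] at hmono
    exact hmono
  -- assemble
  have e1 : (∫ t in (ε*e a+A)..(d b), W t * Vt t)
      = (∫ t in (ε*e a+A)..(A+1), W t * Vt t) + (∫ t in (A+1)..(0:ℝ), W t * Vt t)
        + (∫ t in (0:ℝ)..(d b), W t * Vt t) := by
    linarith [hsplit1, hsplit2]
  have e2 : (∫ t in (A+1)..(0:ℝ), W t * Vt t)
      = (∫ t in (A+1)..(A/2-1), W t * Vt t) + (∫ t in (A/2-1)..(A/2), W t * Vt t)
        + (∫ t in (A/2)..(0:ℝ), W t * Vt t) := by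
    linarith [hsplit3, hsplit4]
  have habs1 := abs_le.mp hG1
  have habs3 := abs_le.mp hG3
  rw [e1, e2]
  linarith [habs1.1, habs3.1, hm1, hm2, hm3, hA3]

end est23


noncomputable def Ffun {n : ℕ} (c : Fin n → ℝ) (y : ℝ) : ℝ := ∫ t in (0:ℝ)..y, Pfun c t

lemma Ffun_sub {n : ℕ} (c : Fin n → ℝ) (y z : ℝ) :
    Ffun c y - Ffun c z = ∫ t in z..y, Pfun c t := by
  have h := integral_add_adjacent_intervals (intgPfun c 0 z) (intgPfun c z y)
  unfold Ffun
  linarith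

def Realizes {n : ℕ} (c : Fin n → ℝ) (σ : Equiv.Perm (Fin n)) : Prop :=
  StrictMono c ∧ ∀ i j, (Ffun c (c i) < Ffun c (c j) ↔ σ i < σ j)

lemma realizes_pair {n : ℕ} {c : Fin n → ℝ} {σ : Equiv.Perm (Fin n)} (h : Realizes c σ)
    (i j : Fin n) : (0 < ∫ t in c i..c j, Pfun c t) ↔ σ i < σ j := by
  rw [← Ffun_sub, sub_pos]
  exact h.2 i j

lemma realizes_of_pairs {n : ℕ} {c : Fin n → ℝ} {σ : Equiv.Perm (Fin n)} (hm : StrictMono c)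
    (h : ∀ i j, (0 < ∫ t in c i..c j, Pfun c t) ↔ σ i < σ j) : Realizes c σ := by
  refine ⟨hm, fun i j => ?_⟩
  rw [← sub_pos, Ffun_sub]
  exact h i j

lemma realizes_pair_ne {n : ℕ} {c : Fin n → ℝ} {σ : Equiv.Perm (Fin n)} (h : Realizes c σ)
    {i j : Fin n} (hij : i ≠ j) : (∫ t in c i..c j, Pfun c t) ≠ 0 := by
  intro hz
  have h1 := realizes_pair h i j
  have h2 := realizes_pair h j i
  rw [integral_symm] at h2
  rw [hz] at h1 h2
  simp at h1 h2
  have : σ i = σ j := le_antisymm h2 h1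
  exact hij (σ.injective this)

/-- Scaling: `Ffun (x • c) (x * u) = x^(n+1) * Ffun c u` for `x > 0`. -/
lemma Ffun_scale {n : ℕ} (c : Fin n → ℝ) {x : ℝ} (hx : 0 < x) (u : ℝ) :
    Ffun (fun i => x * c i) (x * u) = x ^ (n + 1) * Ffun c u := by
  have hptw : ∀ s : ℝ, Pfun (fun i => x * c i) (x * s) = x ^ n * Pfun c s := by
    intro s
    unfold Pfun
    rw [show ∀ (f : Fin n → ℝ), (x:ℝ)^n * ∏ ℓ, f ℓ = ∏ ℓ : Fin n, (x * f ℓ) by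
      intro f; rw [Finset.prod_mul_distrib, Finset.prod_const]; simp]
    exact Finset.prod_congr rfl (fun i _ => by ring)
  have h := integral_comp_mul_left (a := (0:ℝ)) (b := u) (Pfun (fun i => x * c i)) (ne_of_gt hx)
  unfold Ffun
  rw [mul_zero] at h
  have h2 : ∫ s in (0:ℝ)..u, Pfun (fun i => x * c i) (x * s) = x ^ n * ∫ s in (0:ℝ)..u, Pfun c s := by
    calc ∫ s in (0:ℝ)..u, Pfun (fun i => x * c i) (x * s)
        = ∫ s in (0:ℝ)..u, x ^ n * Pfun c s := by
          apply integral_congr; intro s _; exact hptw s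
      _ = x ^ n * ∫ s in (0:ℝ)..u, Pfun c s := integral_const_mul _ _
  rw [h2] at h
  rw [smul_eq_mul] at h
  have hxne : x ≠ 0 := ne_of_gt hx
  field_simp at h
  rw [← h]
  ring

/-- Translation invariance of pairwise integrals. -/
lemma Pfun_shift {n : ℕ} (c : Fin n → ℝ) (s : ℝ) (a b : ℝ) :
    (∫ t in (a+s)..(b+s), Pfun (fun j => c j + s) t) = ∫ t in a..b, Pfun c t := by
  have hptw : ∀ t : ℝ, Pfun (fun j => c j + s) t = Pfun c (t - s) := by
    intro t; unfold Pfun; exact Finset.prod_congr rfl (fun i _ => by ring)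
  rw [show (∫ t in (a+s)..(b+s), Pfun (fun j => c j + s) t)
      = ∫ t in (a+s)..(b+s), Pfun c (t - s) by apply integral_congr; intro t _; exact hptw t]
  rw [integral_comp_sub_right (fun t => Pfun c t) s]
  norm_num

lemma realizes_shift {n : ℕ} {c : Fin n → ℝ} {σ : Equiv.Perm (Fin n)} (h : Realizes c σ) (s : ℝ) :
    Realizes (fun j => c j + s) σ := by
  refine realizes_of_pairs (fun i j hij => by simpa using h.1 hij) (fun i j => ?_)
  rw [Pfun_shift c s (c i) (c j)]
  exact realizes_pair h i j


section glue

lemma fin_split {p q : ℕ} (i : Fin (p + q)) :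
    (∃ a : Fin p, i = Fin.castAdd q a) ∨ (∃ b : Fin q, i = Fin.natAdd p b) := by
  by_cases h : (i : ℕ) < p
  · exact Or.inl ⟨⟨i, h⟩, Fin.ext rfl⟩
  · exact Or.inr ⟨⟨(i : ℕ) - p, by omega⟩, Fin.ext (by simp; omega)⟩

theorem glue_core {p q : ℕ} {π : Equiv.Perm (Fin p)} {τ : Equiv.Perm (Fin q)}
    (hp : 0 < p) (hq : 0 < q) {e : Fin p → ℝ} {d0 : Fin q → ℝ}
    (he : Realizes e π) (hd' : Realizes d0 τ) :
    ∃ c : Fin (p + q) → ℝ, StrictMono c ∧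
      (∀ a b : Fin p,
        ((0 < (-1:ℝ)^q * ∫ t in c (Fin.castAdd q a)..c (Fin.castAdd q b), Pfun c t) ↔ π a < π b)) ∧
      (∀ a b : Fin q,
        ((0 < ∫ t in c (Fin.natAdd p a)..c (Fin.natAdd p b), Pfun c t) ↔ τ a < τ b)) ∧
      (∀ (a : Fin p) (b : Fin q),
        0 < (-1:ℝ)^q * ∫ t in c (Fin.castAdd q a)..c (Fin.natAdd p b), Pfun c t) := by
  classical
  -- normalize the d-configuration to start at 0
  set d : Fin q → ℝ := fun j => d0 j + (-(d0 ⟨0, hq⟩)) with hddef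
  have hd : Realizes d τ := realizes_shift hd' _
  have hd0 : ∀ j, 0 ≤ d j := by
    intro j
    have hle : (⟨0, hq⟩ : Fin q) ≤ j := by simp [Fin.le_def]
    have := hd'.1.monotone hle
    simp only [hddef]
    linarith
  -- constants
  set E : ℝ := (∑ i, |e i|) + 1 with hEdef
  set Dm : ℝ := (∑ j, |d j|) + 1 with hDmdef
  have hsumE : (0:ℝ) ≤ ∑ i, |e i| := Finset.sum_nonneg (fun i _ => abs_nonneg _)
  have hsumD : (0:ℝ) ≤ ∑ j, |d j| := Finset.sum_nonneg (fun j _ => abs_nonneg _)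
  have hE1 : 1 ≤ E := by simp only [hEdef]; linarith
  have hDm1 : 1 ≤ Dm := by simp only [hDmdef]; linarith
  have hEe : ∀ i, |e i| ≤ E := by
    intro i
    have := Finset.single_le_sum (f := fun i => |e i|) (fun i _ => abs_nonneg _)
      (Finset.mem_univ i)
    simp only [hEdef]; linarith
  have hdD : ∀ j, d j ≤ Dm := by
    intro j
    have h1 := Finset.single_le_sum (f := fun j => |d j|) (fun j _ => abs_nonneg _)
      (Finset.mem_univ j)
    have h2 := le_abs_self (d j)
    simp only [hDmdef]; linarith
  -- choose B (so A = -B)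
  set Jd : Fin q × Fin q → ℝ := fun ab => ∫ t in d ab.1..d ab.2, Pfun d t with hJddef
  set Bfun : Fin q × Fin q → ℝ :=
    fun ab => 1 + (2^p * p * (Dm + 2) * Dm^(q+1)) / |Jd ab| with hBfundef
  have hneq : (Finset.univ : Finset (Fin q × Fin q)).Nonempty :=
    ⟨(⟨0, hq⟩, ⟨0, hq⟩), Finset.mem_univ _⟩
  set B : ℝ := max (Dm + 9 + (4^(p+q+2) * (2^(p+1) + Dm^(q+1)) + 4*Dm + 100))
    (Finset.univ.sup' hneq Bfun) with hBdef
  set A : ℝ := -B with hAdef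
  have hform : (0:ℝ) ≤ 4^(p+q+2) * (2^(p+1) + Dm^(q+1)) + 4*Dm + 100 := by positivity
  have hB9 : Dm + 9 ≤ B := le_trans (by linarith) (le_max_left _ _)
  have hBineq3 : 4^(p+q+2) * (2^(p+1) + Dm^(q+1)) + 4*Dm + 100 ≤ B :=
    le_trans (by linarith) (le_max_left _ _)
  have hA1 : A ≤ -(Dm + 9) := by rw [hAdef]; linarith
  have hBpair : ∀ ab, Bfun ab ≤ B :=
    fun ab => le_trans (Finset.le_sup' Bfun (Finset.mem_univ ab)) (le_max_right _ _)
  have hApos : A < 0 := by rw [hAdef]; linarith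
  -- T2 continuity setup
  set TA : ℝ := ∏ j, (d j - A) with hTAdef
  have hTApos : 0 < TA := by
    rw [hTAdef]
    apply Finset.prod_pos
    intro j _
    have := hd0 j
    linarith
  set Je : Fin p × Fin p → ℝ := fun ab => ∫ s in e ab.1..e ab.2, Pfun e s with hJedef
  set δfun : Fin p × Fin p → ℝ :=
    fun ab => if ab.1 = ab.2 then 1 else TA * |Je ab| / ((2*E)^p * (2*E) + 1) with hδfundef
  have hnep : (Finset.univ : Finset (Fin p × Fin p)).Nonempty :=
    ⟨(⟨0, hp⟩, ⟨0, hp⟩), Finset.mem_univ _⟩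
  have hδpos : ∀ ab, 0 < δfun ab := by
    intro ab
    rw [hδfundef]
    by_cases h : ab.1 = ab.2
    · simp [h]
    · simp only [h, if_false]
      have hJene : Je ab ≠ 0 := by
        rw [hJedef]
        exact realizes_pair_ne he h
      have h1 : 0 < |Je ab| := abs_pos.mpr hJene
      have h2 : (0:ℝ) < (2*E)^p * (2*E) + 1 := by positivity
      positivity
  set δm : ℝ := Finset.univ.inf' hnep δfun with hδmdef
  have hδm : 0 < δm := by
    rw [hδmdef, Finset.lt_inf'_iff]
    exact fun b _ => hδpos b
  obtain ⟨r, hr0, hVr⟩ : ∃ r > 0, ∀ y : ℝ, |y - A| < r → |Pfun d y - Pfun d A| < δm := by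
    have hc := (contPfun d).continuousAt (x := A)
    obtain ⟨r, hr0, hball⟩ := Metric.continuousAt_iff.mp hc δm hδm
    refine ⟨r, hr0, fun y hy => ?_⟩
    have := hball (show dist y A < r by rwa [Real.dist_eq])
    rwa [Real.dist_eq] at this
  set ε : ℝ := min (1/E) (r/(2*E)) with hεdef
  have hEpos : (0:ℝ) < E := by linarith
  have hε : 0 < ε := lt_min (by positivity) (by positivity)
  have hεE : ε * E ≤ 1 := by
    have h1 : ε ≤ 1/E := min_le_left _ _
    calc ε * E ≤ (1/E) * E := mul_le_mul_of_nonneg_right h1 (le_of_lt hEpos)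
      _ = 1 := by field_simp
  have hδ : ∀ s : ℝ, |s| ≤ E → |Pfun d (ε * s + A) - Pfun d A| ≤ δm := by
    intro s hs
    apply le_of_lt
    apply hVr
    rw [show ε * s + A - A = ε * s by ring, abs_mul, abs_of_pos hε]
    have h1 : ε ≤ r/(2*E) := min_le_right _ _
    have : ε * |s| ≤ (r/(2*E)) * E :=
      mul_le_mul h1 hs (abs_nonneg s) (by positivity)
    have h2 : (r/(2*E)) * E = r/2 := by field_simp
    linarith
  -- the configuration
  set c : Fin (p+q) → ℝ := Fin.addCases (fun i => ε * e i + A) d with hcdef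
  have hcl : ∀ i : Fin p, c (Fin.castAdd q i) = ε * e i + A := by
    intro i; rw [hcdef]; simp
  have hcr : ∀ j : Fin q, c (Fin.natAdd p j) = d j := by
    intro j; rw [hcdef]; simp
  have hPc : ∀ t : ℝ, Pfun c t = (∏ i : Fin p, (t - (ε * e i + A))) * Pfun d t := by
    intro t
    unfold Pfun
    rw [Fin.prod_univ_add]
    congr 1
    · exact Finset.prod_congr rfl (fun i _ => by rw [hcl])
    · exact Finset.prod_congr rfl (fun j _ => by rw [hcr])
  have hεe : ∀ i, |ε * e i| ≤ 1 := by
    intro i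
    rw [abs_mul, abs_of_pos hε]
    calc ε * |e i| ≤ ε * E := by nlinarith [hEe i, abs_nonneg (e i)]
      _ ≤ 1 := hεE
  -- strict monotonicity
  have hcmono : StrictMono c := by
    intro i j hij
    rcases fin_split i with ⟨a, rfl⟩ | ⟨a, rfl⟩ <;> rcases fin_split j with ⟨b, rfl⟩ | ⟨b, rfl⟩
    · rw [hcl, hcl]
      have hab : a < b := by
        rw [Fin.lt_def] at hij ⊢; simpa using hij
      have := he.1 hab
      nlinarith [hε]
    · rw [hcl, hcr]
      have h1 := (abs_le.mp (hεe a)).2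
      have := hd0 b
      linarith
    · exfalso
      rw [Fin.lt_def] at hij
      simp at hij
      omega
    · rw [hcr, hcr]
      have hab : a < b := by
        rw [Fin.lt_def] at hij ⊢; simpa using hij
      exact hd.1 hab
  refine ⟨c, hcmono, ?_, ?_, ?_⟩
  -- T2 : cluster pairs
  · intro a b
    by_cases hab : a = b
    · subst hab
      simp [lt_irrefl]
    · rw [hcl, hcl]
      have hcong : (∫ t in (ε * e a + A)..(ε * e b + A), Pfun c t)
          = ∫ t in (ε * e a + A)..(ε * e b + A),
              (∏ i : Fin p, (t - (ε * e i + A))) * Pfun d t :=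
        intervalIntegral.integral_congr (fun t _ => hPc t)
      rw [hcong]
      have hJene : Je (a, b) ≠ 0 := by
        rw [hJedef]; exact realizes_pair_ne he hab
      have hJabs : 0 < |Je (a, b)| := abs_pos.mpr hJene
      have hsmall : (2*E)^p * (2*E) * δm < TA * |∫ s in e a..e b, Pfun e s| := by
        have h1 : δm ≤ δfun (a, b) := Finset.inf'_le _ (Finset.mem_univ _)
        have h2 : δfun (a, b) = TA * |Je (a, b)| / ((2*E)^p * (2*E) + 1) := by
          rw [hδfundef]; simp [hab]
        have hX : 0 < TA * |Je (a, b)| := mul_pos hTApos hJabs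
        have hC : (0:ℝ) < (2*E)^p * (2*E) := by positivity
        have h3 : (2*E)^p * (2*E) * (TA * |Je (a,b)| / ((2*E)^p * (2*E) + 1))
            < TA * |Je (a,b)| := by
          have hden : (0:ℝ) < (2*E)^p * (2*E) + 1 := by positivity
          have he1 : (2*E)^p * (2*E) * (TA * |Je (a,b)| / ((2*E)^p * (2*E) + 1))
              = ((2*E)^p * (2*E)) * (TA * |Je (a,b)|) / ((2*E)^p * (2*E) + 1) := by
            ring
          rw [he1, div_lt_iff₀ hden]
          nlinarith [hX, hC]
        have h4 : (2*E)^p * (2*E) * δm ≤ (2*E)^p * (2*E) * δfun (a,b) :=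
          mul_le_mul_of_nonneg_left h1 (le_of_lt hC)
        rw [h2] at h4
        have : (∫ s in e a..e b, Pfun e s) = Je (a,b) := by rw [hJedef]
        rw [this]
        exact lt_of_le_of_lt h4 h3
      have := estT2 (q := q) e d A ε E hE1 hEe hε a b δm hδ
        (fun j => by have := hd0 j; linarith) hsmall
      rw [this]
      exact realizes_pair he a b
  -- T1 : d-block pairs
  · intro a b
    by_cases hab : a = b
    · subst hab
      simp [lt_irrefl]
    · rw [hcr, hcr]
      have hcong : (∫ t in d a..d b, Pfun c t)
          = ∫ t in d a..d b, (∏ i : Fin p, (t - (ε * e i + A))) * Pfun d t :=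
        intervalIntegral.integral_congr (fun t _ => hPc t)
      rw [hcong]
      have hJdne : Jd (a, b) ≠ 0 := by
        rw [hJddef]; exact realizes_pair_ne hd hab
      have hJdabs : 0 < |Jd (a, b)| := abs_pos.mpr hJdne
      have hA2 : 2 ^ p * p * (Dm + 2) * Dm ^ (q+1) < (-A) * |∫ t in d a..d b, Pfun d t| := by
        have h1 : Bfun (a, b) ≤ B := hBpair (a, b)
        have h2 : Bfun (a, b) = 1 + (2^p * p * (Dm + 2) * Dm^(q+1)) / |Jd (a,b)| := by
          rw [hBfundef]
        have h3 : (1 + (2^p * p * (Dm + 2) * Dm^(q+1)) / |Jd (a,b)|) * |Jd (a,b)|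
            = |Jd (a,b)| + 2^p * p * (Dm + 2) * Dm^(q+1) := by
          field_simp
        have h4 : Bfun (a,b) * |Jd (a,b)| ≤ B * |Jd (a,b)| :=
          mul_le_mul_of_nonneg_right h1 (le_of_lt hJdabs)
        rw [h2, h3] at h4
        have h5 : (∫ t in d a..d b, Pfun d t) = Jd (a,b) := by rw [hJddef]
        rw [h5, show -A = B by rw [hAdef]; ring]
        linarith
      have := estT1 (q := q) e d A ε E Dm hp hE1 hEe hd0 hdD hDm1 hε hεE a b
        (by linarith) hA2
      rw [this]
      exact realizes_pair hd a b
  -- T3 : cross pairs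
  · intro a b
    rw [hcl, hcr]
    have hcong : (∫ t in (ε * e a + A)..(d b), Pfun c t)
        = ∫ t in (ε * e a + A)..(d b), (∏ i : Fin p, (t - (ε * e i + A))) * Pfun d t :=
      intervalIntegral.integral_congr (fun t _ => hPc t)
    rw [hcong]
    have hA3 : 2^(p+1) * (-A + Dm + 1)^q + Dm^(q+1) * (-A + Dm + 1)^p < (-A/2 - 2)^(p+q) := by
      have := ineq3 hp hq hDm1 hBineq3
      rw [show -A = B by rw [hAdef]; ring]
      convert this using 3 <;> ring
    exact estT3 e d A ε E Dm hp hE1 hEe hd0 hdD hDm1 hε hεE a b hA1 hA3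

end glue


section glue2

variable {p q : ℕ} {π : Equiv.Perm (Fin p)} {τ : Equiv.Perm (Fin q)}

theorem glue_even (hp : 0 < p) (hq : 0 < q) (hqe : Even q) {e : Fin p → ℝ} {d0 : Fin q → ℝ}
    (he : Realizes e π) (hd : Realizes d0 τ) :
    ∃ c : Fin (p + q) → ℝ, Realizes c (permDirectSum π τ) := by
  obtain ⟨c, hmono, hT2, hT1, hT3⟩ := glue_core hp hq he hd
  have hone : ((-1:ℝ))^q = 1 := Even.neg_one_pow hqe
  rw [hone] at hT2 hT3
  simp only [one_mul] at hT2 hT3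
  refine ⟨c, realizes_of_pairs hmono (fun i j => ?_)⟩
  rcases fin_split i with ⟨a, rfl⟩ | ⟨a, rfl⟩ <;> rcases fin_split j with ⟨b, rfl⟩ | ⟨b, rfl⟩
  · rw [hT2 a b]
    exact (dsum_cmp_left π τ a b).symm
  · have h3 := hT3 a b
    constructor
    · intro _; exact dsum_cmp_cross π τ a b
    · intro _; exact h3
  · have h3 := hT3 b a
    rw [intervalIntegral.integral_symm] at h3
    constructor
    · intro h; linarith
    · intro h; exact absurd h (lt_asymm (dsum_cmp_cross π τ b a))
  · rw [hT1 a b]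
    exact (dsum_cmp_right π τ a b).symm

theorem glue_odd (hp : 0 < p) (hq : 0 < q) (hqo : ¬ Even q) {e : Fin p → ℝ} {d0 : Fin q → ℝ}
    (he : Realizes e π) (hd : Realizes d0 τ) :
    ∃ c : Fin (p + q) → ℝ, Realizes c (permSkewSum (compPerm π) τ) := by
  obtain ⟨c, hmono, hT2, hT1, hT3⟩ := glue_core hp hq he hd
  have hone : ((-1:ℝ))^q = -1 := Odd.neg_one_pow (Nat.not_even_iff_odd.mp hqo)
  rw [hone] at hT2 hT3
  refine ⟨c, realizes_of_pairs hmono (fun i j => ?_)⟩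
  rcases fin_split i with ⟨a, rfl⟩ | ⟨a, rfl⟩ <;> rcases fin_split j with ⟨b, rfl⟩ | ⟨b, rfl⟩
  · -- both cluster: σ = ssum(comp π) τ : value iff π b < π a
    have h2 := hT2 b a
    rw [intervalIntegral.integral_symm] at h2
    have hiff : permSkewSum (compPerm π) τ (Fin.castAdd q a)
        < permSkewSum (compPerm π) τ (Fin.castAdd q b) ↔ π b < π a := by
      rw [ssum_cmp_left]
      exact compPerm_lt π a b
    rw [hiff, ← h2]
    constructor <;> intro h <;> linarith
  · -- cluster vs d-block: σ value: natAdd < castAdd always, so here RHS false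
    have h3 := hT3 a b
    constructor
    · intro h; linarith
    · intro h
      exact absurd h (lt_asymm (ssum_cmp_cross (compPerm π) τ a b))
  · -- d-block vs cluster: RHS true
    have h3 := hT3 b a
    rw [intervalIntegral.integral_symm] at h3
    constructor
    · intro _; exact ssum_cmp_cross (compPerm π) τ b a
    · intro _; linarith
  · rw [hT1 a b]
    exact (ssum_cmp_right (compPerm π) τ a b).symm

end glue2


section main

lemma even_of_not_even_pred {q : ℕ} (hq : 1 ≤ q) (h : ¬ Even (q-1)) : Even q := by
  have e : q - 1 + 1 = q := by omega
  have h2 := Nat.even_add_one (n := q-1)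
  rw [e] at h2
  exact h2.mpr h

/-- The main induction over separable permutations. -/
theorem main_sep : ∀ {n : ℕ} {σ : Equiv.Perm (Fin n)}, PermSeparable σ →
    IsAlternating σ →
    ((∀ h2 : 2 ≤ n, Desc σ (n-2)) → ∃ c, Realizes c σ) ∧
    ((∀ h2 : 2 ≤ n, ¬ Desc σ (n-2)) → ∃ c, Realizes c (compPerm σ)) := by
  intro n σ hsep
  induction hsep with
  | single =>
      intro _
      constructor <;> intro _ <;>
      · refine ⟨fun _ => 0, fun i j h => absurd h (by omega), fun i j => ?_⟩
        rw [Subsingleton.elim i j]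
        simp
  | @dsum p q π τ hπ hτ ihπ ihτ =>
      intro halt
      have hp := sep_pos hπ
      have hq := sep_pos hτ
      have haltπ : IsAlternating π := alt_restrict_left (dsum_cmp_left π τ) halt
      have haltτ : IsAlternating τ := alt_restrict_right (dsum_cmp_right π τ) halt
      have ihπ' := ihπ haltπ
      have ihτ' := ihτ haltτ
      -- junction: no descent at p-1
      have hjunc : ¬ Desc (permDirectSum π τ) (p-1) := by
        rintro ⟨h, hl⟩
        have e1 : (⟨p-1+1, h⟩ : Fin (p+q)) = Fin.natAdd p ⟨0, hq⟩ := by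
          simp [Fin.ext_iff]; omega
        have e0 : (⟨p-1, by omega⟩ : Fin (p+q)) = Fin.castAdd q ⟨p-1, by omega⟩ := by
          simp [Fin.ext_iff]
        rw [e1, e0, dsum_natAdd, dsum_castAdd, Fin.lt_def] at hl
        simp at hl
        have := (π ⟨p-1, by omega⟩).isLt
        omega
      constructor
      · -- final descent: q must be even
        intro hD
        by_cases hq1 : q = 1
        · -- then junction = end: Desc σ (p-1) both false and true
          exfalso
          have := hD (by omega)
          have : Desc (permDirectSum π τ) (p-1) := by
            have e : p + q - 2 = p - 1 := by omega
            rwa [e] at this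
          exact hjunc this
        · have hq2 : 2 ≤ q := by omega
          have hD' := hD (by omega)
          -- parity: Even q
          have hpar := desc_add_iff halt (p-1) (q-1) (by omega)
          have hidx : p - 1 + (q - 1) = p + q - 2 := by omega
          rw [hidx] at hpar
          have hEvq : Even q := by
            have h1 : Even (q-1) ↔ Desc (permDirectSum π τ) (p-1) := hpar.mp hD'
            exact even_of_not_even_pred (by omega) (fun hec => hjunc (h1.mp hec))
          -- τ has final descent
          have hτD : ∀ h2 : 2 ≤ q, Desc τ (q-2) := by
            intro _
            have hdr := desc_restrict_right (q := q) (dsum_cmp_right π τ) (i := q-2)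
              (by omega)
            have e : p + (q - 2) = p + q - 2 := by omega
            rw [e] at hdr
            exact hdr.mp hD'
          obtain ⟨d, hdreal⟩ := ihτ'.1 hτD
          -- π has final descent (if p ≥ 2)
          have hπD : ∀ h2 : 2 ≤ p, Desc π (p-2) := by
            intro hp2
            have hdl := desc_restrict_left (q := q) (dsum_cmp_left π τ) (i := p-2)
              (by omega)
            rw [← hdl]
            -- Desc σ (p-2) from parity with n-2: distance q
            have hpar2 := desc_add_iff halt (p-2) q (by omega)
            have hidx2 : p - 2 + q = p + q - 2 := by omega
            rw [hidx2] at hpar2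
            exact (hpar2.mp hD').mp hEvq
          obtain ⟨e, hereal⟩ := ihπ'.1 hπD
          exact glue_even hp hq hEvq hereal hdreal
      · -- final ascent: realize comp; q must be odd
        intro hA
        have hn2 : 2 ≤ p + q := by omega
        have hA' := hA hn2
        -- q odd
        have hOdq : ¬ Even q := by
          by_cases hq1 : q = 1
          · subst hq1; simp
          · have hq2 : 2 ≤ q := by omega
            have hpar := desc_add_iff halt (p-1) (q-1) (by omega)
            have hidx : p - 1 + (q - 1) = p + q - 2 := by omega
            rw [hidx] at hpar
            intro hec
            have h1 : ¬ Even (q-1) := by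
              have h2 := Nat.even_add_one (n := q - 1)
              have e : q - 1 + 1 = q := by omega
              rw [e] at h2
              exact h2.mp hec
            exact hA' (hpar.mpr ⟨fun h => absurd h h1, fun hd => absurd hd hjunc⟩)
        -- τ final ascent → comp τ realization
        have hτA : ∀ h2 : 2 ≤ q, ¬ Desc τ (q-2) := by
          intro hq2
          have hdr := desc_restrict_right (q := q) (dsum_cmp_right π τ) (i := q-2)
            (by omega)
          have e : p + (q - 2) = p + q - 2 := by omega
          rw [e] at hdr
          intro hc
          exact hA' (hdr.mpr hc)
        obtain ⟨d, hdreal⟩ := ihτ'.2 hτA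
        -- π final descent (q odd case!)
        have hπD : ∀ h2 : 2 ≤ p, Desc π (p-2) := by
          intro hp2
          have hdl := desc_restrict_left (q := q) (dsum_cmp_left π τ) (i := p-2) (by omega)
          rw [← hdl]
          have hpar2 := desc_add_iff halt (p-2) q (by omega)
          have hidx2 : p - 2 + q = p + q - 2 := by omega
          rw [hidx2] at hpar2
          by_contra hnd
          exact hA' (hpar2.mpr ⟨fun h => absurd h hOdq, fun h => absurd h hnd⟩)
        obtain ⟨e, hereal⟩ := ihπ'.1 hπD
        have := glue_odd hp hq hOdq hereal hdreal
        rwa [← comp_dsum] at this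
  | @ssum p q π τ hπ hτ ihπ ihτ =>
      intro halt
      have hp := sep_pos hπ
      have hq := sep_pos hτ
      have haltπ : IsAlternating π := alt_restrict_left (ssum_cmp_left π τ) halt
      have haltτ : IsAlternating τ := alt_restrict_right (ssum_cmp_right π τ) halt
      have ihπ' := ihπ haltπ
      have ihτ' := ihτ haltτ
      -- junction: descent at p-1
      have hjunc : Desc (permSkewSum π τ) (p-1) := by
        refine ⟨by omega, ?_⟩
        have e1 : (⟨p-1+1, by omega⟩ : Fin (p+q)) = Fin.natAdd p ⟨0, hq⟩ := by
          simp [Fin.ext_iff]; omega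
        have e0 : (⟨p-1, by omega⟩ : Fin (p+q)) = Fin.castAdd q ⟨p-1, by omega⟩ := by
          simp [Fin.ext_iff]
        rw [e1, e0, Fin.lt_def, ssum_natAdd, ssum_castAdd]
        have := (τ ⟨0, hq⟩).isLt
        omega
      constructor
      · -- final descent: q odd
        intro hD
        have hD' := hD (by omega)
        have hOdq : ¬ Even q := by
          by_cases hq1 : q = 1
          · subst hq1; simp
          · have hq2 : 2 ≤ q := by omega
            have hpar := desc_add_iff halt (p-1) (q-1) (by omega)
            have hidx : p - 1 + (q - 1) = p + q - 2 := by omega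
            rw [hidx] at hpar
            intro hec
            have h1 : ¬ Even (q-1) := by
              have h2 := Nat.even_add_one (n := q - 1)
              have e : q - 1 + 1 = q := by omega
              rw [e] at h2
              exact h2.mp hec
            exact h1 ((hpar.mp hD').mpr hjunc)
        -- τ final descent
        have hτD : ∀ h2 : 2 ≤ q, Desc τ (q-2) := by
          intro hq2
          have hdr := desc_restrict_right (q := q) (ssum_cmp_right π τ) (i := q-2) (by omega)
          have e : p + (q - 2) = p + q - 2 := by omega
          rw [e] at hdr
          exact hdr.mp hD'
        obtain ⟨d, hdreal⟩ := ihτ'.1 hτD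
        -- π final ascent
        have hπA : ∀ h2 : 2 ≤ p, ¬ Desc π (p-2) := by
          intro hp2
          have hdl := desc_restrict_left (q := q) (ssum_cmp_left π τ) (i := p-2) (by omega)
          rw [← hdl]
          have hpar2 := desc_add_iff halt (p-2) q (by omega)
          have hidx2 : p - 2 + q = p + q - 2 := by omega
          rw [hidx2] at hpar2
          intro hc
          exact hOdq ((hpar2.mp hD').mpr hc)
        obtain ⟨e, hereal⟩ := ihπ'.2 hπA
        have := glue_odd hp hq hOdq hereal hdreal
        rwa [compPerm_comp] at this
      · -- final ascent: realize comp (ssum π τ) = dsum (comp π) (comp τ); q even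
        intro hA
        by_cases hq1 : q = 1
        · exfalso
          have hA' := hA (by omega)
          have : Desc (permSkewSum π τ) (p+q-2) := by
            have e : p + q - 2 = p - 1 := by omega
            rw [e]
            exact hjunc
          exact hA' this
        · have hq2 : 2 ≤ q := by omega
          have hA' := hA (by omega)
          have hEvq : Even q := by
            have hpar := desc_add_iff halt (p-1) (q-1) (by omega)
            have hidx : p - 1 + (q - 1) = p + q - 2 := by omega
            rw [hidx] at hpar
            exact even_of_not_even_pred (by omega)
              (fun hec => hA' (hpar.mpr ⟨fun _ => hjunc, fun _ => hec⟩))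
          have hτA : ∀ h2 : 2 ≤ q, ¬ Desc τ (q-2) := by
            intro _
            have hdr := desc_restrict_right (q := q) (ssum_cmp_right π τ) (i := q-2) (by omega)
            have e : p + (q - 2) = p + q - 2 := by omega
            rw [e] at hdr
            intro hc
            exact hA' (hdr.mpr hc)
          obtain ⟨d, hdreal⟩ := ihτ'.2 hτA
          have hπA : ∀ h2 : 2 ≤ p, ¬ Desc π (p-2) := by
            intro hp2
            have hdl := desc_restrict_left (q := q) (ssum_cmp_left π τ) (i := p-2) (by omega)
            rw [← hdl]
            have hpar2 := desc_add_iff halt (p-2) q (by omega)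
            have hidx2 : p - 2 + q = p + q - 2 := by omega
            rw [hidx2] at hpar2
            intro hc
            exact hA' (hpar2.mpr ⟨fun _ => hc, fun _ => hEvq⟩)
          obtain ⟨e, hereal⟩ := ihπ'.2 hπA
          have := glue_even hp hq hEvq hereal hdreal
          rwa [← comp_ssum] at this

end main


section final

theorem stmt_0 (m : ℕ) (hm : 1 ≤ m) (σ : Equiv.Perm (Fin (m + 1)))
    (hsep : PermSeparable σ) (halt : IsAlternating σ)
    (hlast : σ ⟨m, by omega⟩ < σ ⟨m - 1, by omega⟩) :
    ∃ a : Fin (m + 1) → Polynomial ℝ,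
      (∀ i, (a i).eval 0 = 0) ∧
      (∀ i : ℕ, ∀ h : i + 1 < m + 1, PrecPlus (a ⟨i, by omega⟩) (a ⟨i + 1, h⟩)) ∧
      ∃ x₀ > (0 : ℝ), ∀ x : ℝ, 0 < x → x < x₀ →
        ∀ Q : ℝ → ℝ,
          (∀ y : ℝ, Q y = ∫ t in (0 : ℝ)..y, ∏ ℓ : Fin (m + 1), (t - (a ℓ).eval x)) →
          StrictMono (fun i : Fin (m + 1) => (a i).eval x) ∧
          (∀ y : ℝ, deriv Q y = 0 ↔ ∃ i : Fin (m + 1), y = (a i).eval x) ∧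
          (∀ i : Fin (m + 1), deriv (deriv Q) ((a i).eval x) ≠ 0) ∧
          Function.Injective (fun i : Fin (m + 1) => Q ((a i).eval x)) ∧
          (∀ i j : Fin (m + 1), Q ((a i).eval x) < Q ((a j).eval x) ↔ σ i < σ j) := by
  classical
  have hdesc : ∀ _h2 : 2 ≤ m + 1, Desc σ (m + 1 - 2) := by
    intro _
    refine ⟨by omega, ?_⟩
    have e1 : (⟨m + 1 - 2 + 1, by omega⟩ : Fin (m+1)) = ⟨m, by omega⟩ := by
      simp [Fin.ext_iff]; omega
    have e0 : (⟨m + 1 - 2, by omega⟩ : Fin (m+1)) = ⟨m - 1, by omega⟩ := by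
      simp [Fin.ext_iff]
    rw [e1, e0]
    exact hlast
  obtain ⟨c, hcmono, hcpairs⟩ := (main_sep hsep halt).1 hdesc
  set a : Fin (m+1) → Polynomial ℝ := fun i => Polynomial.C (c i) * Polynomial.X with hadef
  have haval : ∀ (i : Fin (m+1)) (y : ℝ), (a i).eval y = c i * y := by
    intro i y; rw [hadef]; simp
  refine ⟨a, ?_, ?_, 1, one_pos, ?_⟩
  · intro i; rw [haval]; ring
  · intro i h
    refine ⟨1, one_pos, fun x hx _ => ?_⟩
    rw [haval, haval]
    have hlt : (⟨i, by omega⟩ : Fin (m+1)) < ⟨i+1, h⟩ := by simp [Fin.lt_def]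
    have := hcmono hlt
    nlinarith
  · intro x hx _ Q hQ
    set r : Fin (m+1) → ℝ := fun i => c i * x with hrdef
    have hra : ∀ i, (a i).eval x = r i := by intro i; rw [haval, hrdef]
    have hrx : ∀ i, r i = x * c i := by intro i; rw [hrdef]; ring
    have hrmono : StrictMono r := by
      intro i j hij
      rw [hrdef]
      exact (mul_lt_mul_iff_left₀ hx).mpr (hcmono hij)
    have hrinj : Function.Injective r := hrmono.injective
    have hQF : Q = Ffun r := by
      funext y
      rw [hQ y]
      unfold Ffun Pfun
      apply intervalIntegral.integral_congr
      intro t _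
      apply Finset.prod_congr rfl
      intro ℓ _
      rw [hra]
    have hderiv : ∀ y, deriv Q y = Pfun r y := by
      intro y
      rw [hQF]
      unfold Ffun
      exact Continuous.deriv_integral (Pfun r) (contPfun r) 0 y
    have hsc : ∀ k, Ffun r (r k) = x ^ (m+1+1) * Ffun c (c k) := by
      intro k
      have h := Ffun_scale c hx (c k)
      rw [show (fun i => x * c i) = r from funext (fun i => (hrx i).symm)] at h
      rwa [show x * c k = r k from (hrx k).symm] at h
    have hordiff : ∀ i j : Fin (m+1), Q (r i) < Q (r j) ↔ σ i < σ j := by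
      intro i j
      rw [hQF, hsc i, hsc j]
      have hxp : 0 < x^(m+1+1) := pow_pos hx _
      rw [mul_lt_mul_iff_right₀ hxp]
      exact hcpairs i j
    refine ⟨?_, ?_, ?_, ?_, ?_⟩
    · -- strict mono of evals
      have : (fun i : Fin (m+1) => (a i).eval x) = r := funext hra
      rw [this]
      exact hrmono
    · intro y
      rw [hderiv y]
      unfold Pfun
      rw [Finset.prod_eq_zero_iff]
      constructor
      · rintro ⟨i, _, hi⟩
        exact ⟨i, by rw [hra]; linarith [sub_eq_zero.mp hi]⟩
      · rintro ⟨i, hi⟩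
        refine ⟨i, Finset.mem_univ i, ?_⟩
        rw [hra] at hi
        rw [hi]
        ring
    · intro i
      rw [hra]
      have h1 : deriv Q = fun y => (Lagrange.nodal Finset.univ r).eval y := by
        funext y
        rw [hderiv y, Lagrange.eval_nodal]
        rfl
      rw [h1, Polynomial.deriv,
        Lagrange.eval_nodal_derivative_eval_node_eq (Finset.mem_univ i),
        Lagrange.eval_nodal]
      apply Finset.prod_ne_zero_iff.mpr
      intro j hj
      have hne : j ≠ i := Finset.ne_of_mem_erase hj
      intro hc
      exact hne (hrinj (sub_eq_zero.mp hc)).symm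
    · intro i j hij
      have hij' : Q (r i) = Q (r j) := by
        have h1 := hra i
        have h2 := hra j
        simpa [h1, h2] using hij
      have hn1 : ¬ σ i < σ j := fun hc => by
        rw [← hordiff i j, hij'] at hc
        exact lt_irrefl _ hc
      have hn2 : ¬ σ j < σ i := fun hc => by
        rw [← hordiff j i, hij'] at hc
        exact lt_irrefl _ hc
      exact σ.injective (le_antisymm (not_lt.mp hn2) (not_lt.mp hn1))
    · intro i j
      rw [hra, hra]
      exact hordiff i j

end final
end

section
/- Let P : ℝ → ℝ be a nonconstant polynomial function. If a < b are local maximum points of P and no point of the open interval (a, b) is a local maximum point of P, then there exists a unique c ∈ (a, b) that is a local minimum point of P. Symmetrically, if a < b are local minimum points of P and no point of (a, b) is a local minimum point of P, then there exists a unique c ∈ (a, b) that is a local maximum point of P. In other words, the local minima and local maxima of a polynomial function alternate. -/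
lemma const_icc_false (P : Polynomial ℝ) (hP : 0 < P.natDegree)
    {u v : ℝ} (huv : u < v) (h : ∀ t ∈ Set.Icc u v, P.eval t = P.eval u) : False := by
  have h0 : P - Polynomial.C (P.eval u) = 0 := by
    apply Polynomial.eq_zero_of_infinite_isRoot
    apply Set.Infinite.mono _ (Set.infinite_coe_iff.mp (Set.Icc.infinite huv))
    intro t ht
    simp [Polynomial.IsRoot, h t ht]
  have hPc : P = Polynomial.C (P.eval u) := by
    have := sub_eq_zero.mp h0; exact this
  rw [hPc] at hP
  simp at hP

lemma aux (P : Polynomial ℝ) (hP : 0 < P.natDegree) (a b : ℝ) (hab : a < b)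
    (ha : IsLocalMax (fun t => P.eval t) a) (hb : IsLocalMax (fun t => P.eval t) b)
    (hno : ∀ c ∈ Set.Ioo a b, ¬ IsLocalMax (fun t => P.eval t) c) :
    ∃! c, c ∈ Set.Ioo a b ∧ IsLocalMin (fun t => P.eval t) c := by
  set f : ℝ → ℝ := fun t => P.eval t with hf
  have hcont : ContinuousOn f (Set.Icc a b) := (Polynomial.continuous P).continuousOn
  -- no two distinct local mins in Ioo a b
  have htwo : ∀ x y : ℝ, x ∈ Set.Ioo a b → y ∈ Set.Ioo a b → x < y →
      IsLocalMin f x → IsLocalMin f y → False := by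
    intro x y hx hy hxy hmx hmy
    obtain ⟨d, hd, hdmax⟩ := isCompact_Icc.exists_isMaxOn (Set.nonempty_Icc.2 hxy.le)
      ((Polynomial.continuous P).continuousOn)
    rcases eq_or_lt_of_le hd.1 with hdx | hdx
    · -- d = x : f constant to the right of x
      obtain ⟨ε, hε, hball⟩ := Metric.eventually_nhds_iff.mp hmx
      refine const_icc_false P hP (u := x) (v := min y (x + ε/2)) (lt_min hxy (by linarith)) ?_
      intro t ht
      have h1 : f x ≤ f t := by
        apply hball
        rw [Real.dist_eq, abs_of_nonneg (by linarith [ht.1])]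
        have := ht.2; have := min_le_right y (x + ε/2); linarith [le_trans ht.2 (min_le_right y (x+ε/2))]
      have h2 : f t ≤ f x := by
        rw [hdx]
        exact hdmax ⟨ht.1, le_trans ht.2 (min_le_left _ _)⟩
      exact le_antisymm h2 h1
    rcases eq_or_lt_of_le hd.2 with hdy | hdy
    · -- d = y : f constant to the left of y
      obtain ⟨ε, hε, hball⟩ := Metric.eventually_nhds_iff.mp hmy
      have hu : max x (y - ε/2) < y := max_lt hxy (by linarith)
      refine const_icc_false P hP (u := max x (y - ε/2)) (v := y) hu ?_
      have key : ∀ t ∈ Set.Icc (max x (y - ε/2)) y, f t = f y := by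
        intro t ht
        have h1 : f y ≤ f t := by
          apply hball
          rw [Real.dist_eq, abs_of_nonpos (by linarith [ht.2])]
          have := le_trans (le_max_right x (y - ε/2)) ht.1; linarith
        have h2 : f t ≤ f y := by
          rw [← hdy]
          exact hdmax ⟨le_trans (le_max_left _ _) ht.1, ht.2⟩
        exact le_antisymm h2 h1
      intro t ht
      exact (key t ht).trans (key _ (Set.left_mem_Icc.2 hu.le)).symm
    · -- d interior: local max in Ioo a b
      refine hno d ⟨lt_trans hx.1 hdx, lt_trans hdy hy.2⟩ ?_
      have : Set.Ioo x y ∈ nhds d := isOpen_Ioo.mem_nhds ⟨hdx, hdy⟩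
      exact Filter.eventually_of_mem this (fun t ht => hdmax ⟨ht.1.le, ht.2.le⟩)
  -- existence
  obtain ⟨c, hc, hcmin⟩ := isCompact_Icc.exists_isMinOn (Set.nonempty_Icc.2 hab.le) hcont
  have hca : a ≠ c := by
    intro h; subst h
    obtain ⟨ε, hε, hball⟩ := Metric.eventually_nhds_iff.mp ha
    refine const_icc_false P hP (u := a) (v := min b (a + ε/2)) (lt_min hab (by linarith)) ?_
    intro t ht
    have h1 : f t ≤ f a := by
      apply hball
      rw [Real.dist_eq, abs_of_nonneg (by linarith [ht.1])]
      linarith [le_trans ht.2 (min_le_right b (a+ε/2))]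
    have h2 : f a ≤ f t := hcmin ⟨ht.1, le_trans ht.2 (min_le_left _ _)⟩
    exact le_antisymm h1 h2
  have hcb : c ≠ b := by
    intro h; subst h
    obtain ⟨ε, hε, hball⟩ := Metric.eventually_nhds_iff.mp hb
    have hu : max a (c - ε/2) < c := max_lt hab (by linarith)
    refine const_icc_false P hP (u := max a (c - ε/2)) (v := c) hu ?_
    have key : ∀ t ∈ Set.Icc (max a (c - ε/2)) c, f t = f c := by
      intro t ht
      have h1 : f t ≤ f c := by
        apply hball
        rw [Real.dist_eq, abs_of_nonpos (by linarith [ht.2])]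
        have := le_trans (le_max_right a (c - ε/2)) ht.1; linarith
      have h2 : f c ≤ f t := hcmin ⟨le_trans (le_max_left _ _) ht.1, ht.2⟩
      exact le_antisymm h1 h2
    intro t ht
    exact (key t ht).trans (key _ (Set.left_mem_Icc.2 hu.le)).symm
  have hcIoo : c ∈ Set.Ioo a b := ⟨lt_of_le_of_ne hc.1 hca, lt_of_le_of_ne hc.2 hcb⟩
  have hcloc : IsLocalMin f c := by
    have : Set.Ioo a b ∈ nhds c := isOpen_Ioo.mem_nhds hcIoo
    exact Filter.eventually_of_mem this (fun t ht => hcmin ⟨ht.1.le, ht.2.le⟩)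
  refine ⟨c, ⟨hcIoo, hcloc⟩, ?_⟩
  rintro y ⟨hyIoo, hyloc⟩
  rcases lt_trichotomy y c with h | h | h
  · exact absurd (htwo y c hyIoo hcIoo h hyloc hcloc) (fun x => x)
  · exact h
  · exact absurd (htwo c y hcIoo hyIoo h hcloc hyloc) (fun x => x)

theorem stmt_2 (P : Polynomial ℝ) (hP : 0 < P.natDegree) :
    (∀ a b : ℝ, a < b →
      IsLocalMax (fun t => P.eval t) a → IsLocalMax (fun t => P.eval t) b →
      (∀ c ∈ Set.Ioo a b, ¬ IsLocalMax (fun t => P.eval t) c) →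
      ∃! c, c ∈ Set.Ioo a b ∧ IsLocalMin (fun t => P.eval t) c) ∧
    (∀ a b : ℝ, a < b →
      IsLocalMin (fun t => P.eval t) a → IsLocalMin (fun t => P.eval t) b →
      (∀ c ∈ Set.Ioo a b, ¬ IsLocalMin (fun t => P.eval t) c) →
      ∃! c, c ∈ Set.Ioo a b ∧ IsLocalMax (fun t => P.eval t) c) := by
  constructor
  · exact fun a b hab ha hb hno => aux P hP a b hab ha hb hno
  · intro a b hab ha hb hno
    have hneg : (fun t => (-P).eval t) = fun t => -(P.eval t) := by
      funext t; simp
    have hP' : 0 < (-P).natDegree := by rwa [Polynomial.natDegree_neg]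
    have key := aux (-P) hP' a b hab (by rw [hneg]; exact ha.neg) (by rw [hneg]; exact hb.neg)
      (by intro c hc hmax; exact hno c hc (by rw [hneg] at hmax; simpa using hmax.neg))
    obtain ⟨c, ⟨hc1, hc2⟩, huniq⟩ := key
    rw [hneg] at hc2
    refine ⟨c, ⟨hc1, by simpa using hc2.neg⟩, ?_⟩
    rintro y ⟨hy1, hy2⟩
    exact huniq y ⟨hy1, by rw [hneg]; exact hy2.neg⟩
end

section
/- Let m ≥ 1 and let a_1, …, a_{m+1} ∈ ℝ[X] satisfy a_i(0) = 0 for all i and a_1 ≺₊ a_2 ≺₊ ⋯ ≺₊ a_{m+1}. Set e_i := ord(a_{i+1} − a_i) for 1 ≤ i ≤ m, and for 1 ≤ i ≤ m let T_i ∈ ℝ[X] be the unique polynomial with T_i(x) = ∫_{a_i(x)}^{a_{i+1}(x)} ∏_{ℓ=1}^{m+1} (t − a_ℓ(x)) dt for all x ∈ ℝ. Then T_i is nonzero and ord(T_i) = 3·e_i + Σ_{j ∈ {1,…,m+1}, j ≠ i, j ≠ i+1} min( ord(a_j − a_i), e_i ). -/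
open Polynomial MeasureTheory Set intervalIntegral

/-- Integral over [0,1] of a polynomial (in Y) with polynomial coefficients. -/
noncomputable def polyInt (P : Polynomial (Polynomial ℝ)) : Polynomial ℝ :=
  ∑ k ∈ Finset.range (P.natDegree + 1), Polynomial.C (((k : ℝ) + 1)⁻¹) * P.coeff k

lemma eval_polyInt (P : Polynomial (Polynomial ℝ)) (x : ℝ) :
    (polyInt P).eval x
      = ∫ s in (0:ℝ)..1, Polynomial.eval s (P.map (Polynomial.evalRingHom x)) := by
  have hdeg : (P.map (Polynomial.evalRingHom x)).natDegree < P.natDegree + 1 :=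
    Nat.lt_succ_of_le natDegree_map_le
  have hEval : ∀ s : ℝ, Polynomial.eval s (P.map (Polynomial.evalRingHom x))
      = ∑ k ∈ Finset.range (P.natDegree + 1), (P.coeff k).eval x * s ^ k := by
    intro s
    rw [Polynomial.eval_eq_sum_range' hdeg]
    refine Finset.sum_congr rfl fun k _ => ?_
    rw [Polynomial.coeff_map]; rfl
  calc (polyInt P).eval x
      = ∑ k ∈ Finset.range (P.natDegree + 1), ((k : ℝ) + 1)⁻¹ * (P.coeff k).eval x := by
        simp [polyInt, Polynomial.eval_finset_sum]
    _ = ∑ k ∈ Finset.range (P.natDegree + 1),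
          ∫ s in (0:ℝ)..1, (P.coeff k).eval x * s ^ k := by
        refine Finset.sum_congr rfl fun k _ => ?_
        rw [intervalIntegral.integral_const_mul, integral_pow]
        simp [mul_comm]
    _ = ∫ s in (0:ℝ)..1, ∑ k ∈ Finset.range (P.natDegree + 1), (P.coeff k).eval x * s ^ k := by
        rw [intervalIntegral.integral_finset_sum]
        intro k _
        exact (Continuous.intervalIntegrable (by continuity) _ _)
    _ = _ := by
        refine intervalIntegral.integral_congr fun s _ => ?_
        rw [hEval]

lemma integral_subst (α d : ℝ) (g : ℝ → ℝ) (hg : Continuous g) :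
    (∫ t in α..(α + d), g t) = ∫ s in (0:ℝ)..1, d * g (α + s * d) := by
  have h := intervalIntegral.integral_comp_smul_deriv
    (f := fun s : ℝ => α + s * d) (f' := fun _ => d) (g := g) (a := (0:ℝ)) (b := 1)
    (fun s _ => ((hasDerivAt_mul_const d).const_add α)) (continuousOn_const) hg
  simp only [smul_eq_mul, Function.comp] at h
  rw [show α = α + 0 * d by ring, show α + 0 * d + d = α + 1 * d by ring, ← h]
  norm_num

/-- limit sign lemma -/
lemma eval_zero_nonneg_of_eventually (p : Polynomial ℝ)
    (h : ∀ᶠ x in nhdsWithin (0:ℝ) (Set.Ioi 0), 0 ≤ p.eval x) : 0 ≤ p.eval 0 := by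
  have ht : Filter.Tendsto (fun x => p.eval x) (nhdsWithin (0:ℝ) (Set.Ioi 0))
      (nhds (p.eval 0)) := (p.continuous.tendsto 0).mono_left nhdsWithin_le_nhds
  exact ge_of_tendsto ht h

noncomputable def ordPart (p : Polynomial ℝ) : Polynomial ℝ :=
  p /ₘ (X - C 0) ^ (rootMultiplicity 0 p)

lemma ordPart_eval (p : Polynomial ℝ) (x : ℝ) :
    p.eval x = x ^ rootMultiplicity 0 p * (ordPart p).eval x := by
  conv_lhs => rw [← pow_mul_divByMonic_rootMultiplicity_eq p 0]
  simp [ordPart]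

lemma ordPart_eval_zero_ne (p : Polynomial ℝ) (hp : p ≠ 0) : (ordPart p).eval 0 ≠ 0 :=
  eval_divByMonic_pow_rootMultiplicity_ne_zero 0 hp

lemma ordPart_eval_zero_pos (p : Polynomial ℝ) (x₀ : ℝ) (hx₀ : 0 < x₀)
    (h : ∀ x, 0 < x → x < x₀ → 0 < p.eval x) : 0 < (ordPart p).eval 0 := by
  have hp : p ≠ 0 := by
    intro h0
    have := h (x₀/2) (by linarith) (by linarith)
    rw [h0] at this; simp at this
  have hnn : 0 ≤ (ordPart p).eval 0 := by
    apply eval_zero_nonneg_of_eventually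
    filter_upwards [Ioo_mem_nhdsGT hx₀] with x hx
    have hpx := h x hx.1 hx.2
    rw [ordPart_eval p x] at hpx
    nlinarith [pow_pos hx.1 (rootMultiplicity 0 p), hpx]
  exact lt_of_le_of_ne hnn (Ne.symm (ordPart_eval_zero_ne p hp))

lemma integral_poly_ne_zero (w : Polynomial ℝ) (hw : w ≠ 0) (c : ℝ) (hc : c ≠ 0)
    (hsign : ∀ s ∈ Icc (0:ℝ) 1, 0 ≤ c * w.eval s) :
    (∫ s in (0:ℝ)..1, w.eval s) ≠ 0 := by
  have hcont : Continuous fun s => c * w.eval s := continuous_const.mul w.continuous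
  have hpos : 0 < ∫ s in (0:ℝ)..1, c * w.eval s := by
    rw [integral_pos_iff_support_of_nonneg_ae']
    · refine ⟨by norm_num, ?_⟩
      have hroots : volume {s : ℝ | w.IsRoot s} = 0 :=
        (Polynomial.finite_setOf_isRoot hw).measure_zero volume
      have hsub : Ioc (0:ℝ) 1 \ {s : ℝ | w.IsRoot s}
          ⊆ Function.support (fun s => c * w.eval s) ∩ Ioc 0 1 := by
        rintro s ⟨hs, hroot⟩
        refine ⟨?_, hs⟩
        simp only [Function.mem_support]
        exact mul_ne_zero hc (fun h => hroot h)
      calc (0:ENNReal) < 1 := by norm_num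
        _ = volume (Ioc (0:ℝ) 1) := by simp
        _ = volume (Ioc (0:ℝ) 1 \ {s : ℝ | w.IsRoot s}) := (measure_diff_null hroots).symm
        _ ≤ _ := measure_mono hsub
    · rw [Set.uIoc_of_le (by norm_num : (0:ℝ) ≤ 1)]
      refine MeasureTheory.ae_restrict_of_forall_mem measurableSet_Ioc fun s hs => ?_
      exact hsign s ⟨hs.1.le, hs.2⟩
    · exact hcont.intervalIntegrable _ _
  intro h0
  rw [intervalIntegral.integral_const_mul, h0, mul_zero] at hpos
  exact lt_irrefl 0 hpos

lemma PrecPlus.trans' {P Q R : Polynomial ℝ} (h1 : PrecPlus P Q) (h2 : PrecPlus Q R) :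
    PrecPlus P R := by
  obtain ⟨x₁, hx₁, h1⟩ := h1
  obtain ⟨x₂, hx₂, h2⟩ := h2
  exact ⟨min x₁ x₂, lt_min hx₁ hx₂, fun x hx hx' =>
    (h1 x hx (lt_of_lt_of_le hx' (min_le_left _ _))).trans
      (h2 x hx (lt_of_lt_of_le hx' (min_le_right _ _)))⟩

lemma chain_prec (m : ℕ) (a : ℕ → Polynomial ℝ)
    (hchain : ∀ i, 1 ≤ i → i ≤ m → PrecPlus (a i) (a (i + 1))) :
    ∀ j k, 1 ≤ j → j < k → k ≤ m + 1 → PrecPlus (a j) (a k) := by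
  intro j k hj hjk hk
  induction k with
  | zero => omega
  | succ n ih =>
    rcases Nat.lt_or_ge j n with h | h
    · exact (ih h (by omega)).trans' (hchain n (by omega) (by omega))
    · have : j = n := by omega
      subst this
      exact hchain j (by omega) (by omega)

set_option maxHeartbeats 1000000 in
theorem stmt_5 (m : ℕ) (hm : 1 ≤ m) (a : ℕ → Polynomial ℝ)
    (hzero : ∀ i, 1 ≤ i → i ≤ m + 1 → (a i).eval 0 = 0)
    (hchain : ∀ i, 1 ≤ i → i ≤ m → PrecPlus (a i) (a (i + 1))) :
    ∀ i, 1 ≤ i → i ≤ m → ∀ T : Polynomial ℝ,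
      (∀ x : ℝ, T.eval x =
        ∫ t in ((a i).eval x)..((a (i + 1)).eval x),
          ∏ ℓ ∈ Finset.Icc 1 (m + 1), (t - (a ℓ).eval x)) →
      T ≠ 0 ∧
        rootMultiplicity 0 T =
          3 * rootMultiplicity 0 (a (i + 1) - a i) +
            ∑ j ∈ (Finset.Icc 1 (m + 1)).filter (fun j => j ≠ i ∧ j ≠ i + 1),
              min (rootMultiplicity 0 (a j - a i))
                (rootMultiplicity 0 (a (i + 1) - a i)) := by
  intro i hi1 him T hT
  have hprec := chain_prec m a hchain
  set d : Polynomial ℝ := a (i + 1) - a i with hd_def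
  set e : ℕ := rootMultiplicity 0 d with he_def
  set J : Finset ℕ := (Finset.Icc 1 (m + 1)).filter (fun j => j ≠ i ∧ j ≠ i + 1) with hJ_def
  set N : ℕ := 3 * e + ∑ j ∈ J, min (rootMultiplicity 0 (a j - a i)) e with hN_def
  set d1 : Polynomial ℝ := ordPart d with hd1_def
  -- shorthand
  set f : ℕ → ℕ := fun ℓ => rootMultiplicity 0 (a ℓ - a i) with hf_def
  set mm : ℕ → ℕ := fun ℓ => min (f ℓ) e with hmm_def
  set b1 : ℕ → Polynomial ℝ := fun ℓ => ordPart (a ℓ - a i) with hb1_def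
  -- membership facts
  have hJmem : ∀ ℓ ∈ J, (1 ≤ ℓ ∧ ℓ ≤ m + 1) ∧ (ℓ < i ∨ i + 1 < ℓ) := by
    intro ℓ hℓ
    simp only [hJ_def, Finset.mem_filter, Finset.mem_Icc] at hℓ
    exact ⟨⟨hℓ.1.1, hℓ.1.2⟩, by omega⟩
  -- sign of d near 0+
  obtain ⟨x₀, hx₀, hdx⟩ := hchain i hi1 him
  have hdx' : ∀ x, 0 < x → x < x₀ → 0 < d.eval x := by
    intro x h1 h2
    simpa [hd_def] using sub_pos.mpr (hdx x h1 h2)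
  have hd_ne : d ≠ 0 := by
    intro h0
    have := hdx' (x₀ / 2) (by linarith) (by linarith)
    rw [h0] at this; simp at this
  have hd1pos : 0 < d1.eval 0 := ordPart_eval_zero_pos d x₀ hx₀ hdx'
  -- per-ℓ sign facts
  set σ : ℕ → ℝ := fun ℓ => if ℓ < i then 1 else -1 with hσ_def
  have hb_ne : ∀ ℓ ∈ J, a ℓ - a i ≠ 0 := by
    intro ℓ hℓ
    obtain ⟨⟨h1, h2⟩, hlt⟩ := hJmem ℓ hℓ
    rcases hlt with h | h
    · obtain ⟨y₀, hy₀, hy⟩ := hprec ℓ i h1 h (by omega)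
      intro h0
      have := hy (y₀ / 2) (by linarith) (by linarith)
      have h0' : (a ℓ - a i).eval (y₀ / 2) = 0 := by rw [h0]; simp
      rw [eval_sub, sub_eq_zero] at h0'
      linarith [h0', this]
    · obtain ⟨y₀, hy₀, hy⟩ := hprec i ℓ hi1 (by omega) h2
      intro h0
      have := hy (y₀ / 2) (by linarith) (by linarith)
      have h0' : (a ℓ - a i).eval (y₀ / 2) = 0 := by rw [h0]; simp
      rw [eval_sub, sub_eq_zero] at h0'
      linarith [h0', this]
  -- the key sign lemma
  have hsig : ∀ ℓ ∈ J, ∀ s ∈ Ioo (0:ℝ) 1,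
      0 ≤ σ ℓ * (((0:ℝ) ^ (e - mm ℓ) * d1.eval 0) * s - (0:ℝ) ^ (f ℓ - mm ℓ) * (b1 ℓ).eval 0) := by
    intro ℓ hℓ s hs
    obtain ⟨⟨h1ℓ, h2ℓ⟩, hlt⟩ := hJmem ℓ hℓ
    have hmme : mm ℓ ≤ e := min_le_right _ _
    have hmmf : mm ℓ ≤ f ℓ := min_le_left _ _
    set q : Polynomial ℝ := Polynomial.C (σ ℓ) *
      (Polynomial.C s * ((X : Polynomial ℝ) ^ (e - mm ℓ) * d1)
        - (X : Polynomial ℝ) ^ (f ℓ - mm ℓ) * b1 ℓ) with hq_def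
    have hid : ∀ x : ℝ, x ^ mm ℓ *
        (Polynomial.C s * ((X : Polynomial ℝ) ^ (e - mm ℓ) * d1)
          - (X : Polynomial ℝ) ^ (f ℓ - mm ℓ) * b1 ℓ).eval x
        = s * d.eval x - (a ℓ - a i).eval x := by
      intro x
      have hfr : rootMultiplicity 0 (a ℓ - a i) = f ℓ := rfl
      have hbr : ordPart (a ℓ - a i) = b1 ℓ := rfl
      have hdr : ordPart d = d1 := rfl
      rw [ordPart_eval d x, ordPart_eval (a ℓ - a i) x, hfr, hbr, hdr, ← he_def]
      have h1 : x ^ mm ℓ * x ^ (e - mm ℓ) = x ^ e := by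
        rw [← pow_add]; congr 1; omega
      have h2 : x ^ mm ℓ * x ^ (f ℓ - mm ℓ) = x ^ (f ℓ) := by
        rw [← pow_add]; congr 1; omega
      simp only [eval_sub, eval_mul, eval_C, eval_pow, eval_X]
      linear_combination (s * Polynomial.eval x d1) * h1 - Polynomial.eval x (b1 ℓ) * h2
    have h0 : 0 ≤ q.eval 0 := by
      apply eval_zero_nonneg_of_eventually
      rcases hlt with hcase | hcase
      · obtain ⟨y₀, hy₀, hy⟩ := hprec ℓ i h1ℓ hcase (by omega)
        filter_upwards [Ioo_mem_nhdsGT (lt_min hx₀ hy₀)] with x hx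
        have hdp : 0 < d.eval x := hdx' x hx.1 (lt_of_lt_of_le hx.2 (min_le_left _ _))
        have hbn : (a ℓ - a i).eval x < 0 := by
          rw [eval_sub]
          have := hy x hx.1 (lt_of_lt_of_le hx.2 (min_le_right _ _))
          linarith
        have hxp : 0 < x ^ mm ℓ := pow_pos hx.1 _
        have hpos : 0 < s * d.eval x - (a ℓ - a i).eval x := by nlinarith [hs.1]
        have := hid x
        have hinner : 0 < (Polynomial.C s * ((X : Polynomial ℝ) ^ (e - mm ℓ) * d1)
            - (X : Polynomial ℝ) ^ (f ℓ - mm ℓ) * b1 ℓ).eval x := by nlinarith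
        have hσ : σ ℓ = 1 := by simp [hσ_def, hcase]
        rw [hq_def, eval_mul, eval_C, hσ, one_mul]
        exact hinner.le
      · obtain ⟨y₀, hy₀, hy⟩ := hprec (i + 1) ℓ (by omega) hcase h2ℓ
        filter_upwards [Ioo_mem_nhdsGT (lt_min hx₀ hy₀)] with x hx
        have hdp : 0 < d.eval x := hdx' x hx.1 (lt_of_lt_of_le hx.2 (min_le_left _ _))
        have hbg : d.eval x < (a ℓ - a i).eval x := by
          have := hy x hx.1 (lt_of_lt_of_le hx.2 (min_le_right _ _))
          simp only [hd_def, eval_sub]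
          linarith
        have hxp : 0 < x ^ mm ℓ := pow_pos hx.1 _
        have hneg : s * d.eval x - (a ℓ - a i).eval x < 0 := by nlinarith [hs.2]
        have := hid x
        have hinner : (Polynomial.C s * ((X : Polynomial ℝ) ^ (e - mm ℓ) * d1)
            - (X : Polynomial ℝ) ^ (f ℓ - mm ℓ) * b1 ℓ).eval x < 0 := by nlinarith
        have hσ : σ ℓ = -1 := by
          have : ¬ ℓ < i := by omega
          simp [hσ_def, this]
        rw [hq_def, eval_mul, eval_C, hσ]
        nlinarith
    have heq : q.eval 0 = σ ℓ * (((0:ℝ) ^ (e - mm ℓ) * d1.eval 0) * s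
        - (0:ℝ) ^ (f ℓ - mm ℓ) * (b1 ℓ).eval 0) := by
      rw [hq_def]
      simp only [eval_mul, eval_sub, eval_C, eval_pow, eval_X]
      ring
    rw [heq] at h0
    exact h0
  -- the two-variable polynomial
  set G : Polynomial (Polynomial ℝ) :=
    Polynomial.C (d1 ^ 3) * (Polynomial.X * (Polynomial.X - 1)) *
      ∏ ℓ ∈ J, (Polynomial.C ((X : Polynomial ℝ) ^ (e - mm ℓ) * d1) * Polynomial.X
        - Polynomial.C ((X : Polynomial ℝ) ^ (f ℓ - mm ℓ) * b1 ℓ)) with hG_def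
  have hGeval : ∀ x s : ℝ, Polynomial.eval s (G.map (Polynomial.evalRingHom x))
      = (d1.eval x) ^ 3 * (s * (s - 1)) *
        ∏ ℓ ∈ J, ((x ^ (e - mm ℓ) * d1.eval x) * s - x ^ (f ℓ - mm ℓ) * (b1 ℓ).eval x) := by
    intro x s
    rw [hG_def]
    simp only [Polynomial.eval_map, eval₂_mul, eval₂_sub, eval₂_X, eval₂_C, eval₂_one,
      Polynomial.eval₂_finset_prod, coe_evalRingHom, eval_mul, eval_pow, eval_X, eval_one,
      Polynomial.eval_pow]
  -- main pointwise identity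
  have key : ∀ x : ℝ, ((X : Polynomial ℝ) ^ N * polyInt G).eval x =
      ∫ t in ((a i).eval x)..((a (i + 1)).eval x),
        ∏ ℓ ∈ Finset.Icc 1 (m + 1), (t - (a ℓ).eval x) := by
    intro x
    have hsplit : (Finset.Icc 1 (m + 1)).filter (fun j => ¬(j ≠ i ∧ j ≠ i + 1)) = {i, i + 1} := by
      ext j
      simp only [Finset.mem_filter, Finset.mem_Icc, Finset.mem_insert, Finset.mem_singleton]
      constructor
      · intro h; tauto
      · intro h
        refine ⟨by omega, by tauto⟩
    have hprodsplit : ∀ F : ℕ → ℝ, ∏ ℓ ∈ Finset.Icc 1 (m + 1), F ℓ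
        = (∏ ℓ ∈ J, F ℓ) * (F i * F (i + 1)) := by
      intro F
      rw [← Finset.prod_filter_mul_prod_filter_not (Finset.Icc 1 (m + 1))
        (fun j => j ≠ i ∧ j ≠ i + 1) F, hsplit, Finset.prod_pair (by omega : i ≠ i + 1), ← hJ_def]
    have hcont : Continuous fun t : ℝ => ∏ ℓ ∈ Finset.Icc 1 (m + 1), (t - (a ℓ).eval x) := by
      apply continuous_finset_prod
      intro ℓ _
      exact continuous_id.sub continuous_const
    have heval1 : (a (i + 1)).eval x = (a i).eval x + d.eval x := by
      simp [hd_def]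
    have hdx2 : d.eval x = x ^ e * d1.eval x := by
      have := ordPart_eval d x
      rw [← he_def] at this
      exact this
    rw [heval1, integral_subst _ _ _ hcont, eval_mul, eval_pow, eval_X, eval_polyInt,
      ← intervalIntegral.integral_const_mul]
    refine intervalIntegral.integral_congr fun s _ => ?_
    rw [hGeval x s, hprodsplit]
    have hfac : ∏ ℓ ∈ J, ((a i).eval x + s * d.eval x - (a ℓ).eval x)
        = x ^ (∑ ℓ ∈ J, mm ℓ) *
          ∏ ℓ ∈ J, ((x ^ (e - mm ℓ) * d1.eval x) * s - x ^ (f ℓ - mm ℓ) * (b1 ℓ).eval x) := by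
      rw [← Finset.prod_pow_eq_pow_sum, ← Finset.prod_mul_distrib]
      refine Finset.prod_congr rfl fun ℓ hℓ => ?_
      have hmme : mm ℓ ≤ e := min_le_right _ _
      have hmmf : mm ℓ ≤ f ℓ := min_le_left _ _
      have hfr : rootMultiplicity 0 (a ℓ - a i) = f ℓ := rfl
      have hbr : ordPart (a ℓ - a i) = b1 ℓ := rfl
      have h1 : x ^ mm ℓ * x ^ (e - mm ℓ) = x ^ e := by rw [← pow_add]; congr 1; omega
      have h2 : x ^ mm ℓ * x ^ (f ℓ - mm ℓ) = x ^ (f ℓ) := by rw [← pow_add]; congr 1; omega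
      have hb : (a ℓ).eval x = (a i).eval x + x ^ (f ℓ) * (b1 ℓ).eval x := by
        have h3 := ordPart_eval (a ℓ - a i) x
        rw [hfr, hbr, eval_sub] at h3
        linarith
      rw [hb, hdx2]
      linear_combination (Polynomial.eval x (b1 ℓ)) * h2 - (s * d1.eval x) * h1
    have hFi : (a i).eval x + s * d.eval x - (a i).eval x = s * d.eval x := by ring
    have hFi1 : (a i).eval x + s * d.eval x - (a (i + 1)).eval x = (s - 1) * d.eval x := by
      rw [heval1]; ring
    have hxN : x ^ N = (x ^ e) ^ 3 * x ^ (∑ ℓ ∈ J, mm ℓ) := by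
      rw [hN_def, Nat.mul_comm 3 e, pow_add, pow_mul]
    rw [hfac, hFi, hFi1, hxN, hdx2]
    ring
  have hTU : T = (X : Polynomial ℝ) ^ N * polyInt G :=
    Polynomial.funext fun x => by rw [hT x, key x]
  -- nonvanishing of the constant term of polyInt G
  have hV0 : (polyInt G).eval 0 ≠ 0 := by
    rw [eval_polyInt G 0]
    have hev : ∀ s : ℝ, Polynomial.eval s (G.map (Polynomial.evalRingHom 0))
        = (d1.eval 0) ^ 3 * (s * (s - 1)) *
          ∏ ℓ ∈ J, ((0:ℝ) ^ (e - mm ℓ) * d1.eval 0 * s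
            - (0:ℝ) ^ (f ℓ - mm ℓ) * (b1 ℓ).eval 0) := fun s => hGeval 0 s
    have hw_eq : G.map (Polynomial.evalRingHom 0)
        = Polynomial.C ((d1.eval 0) ^ 3) * (Polynomial.X * (Polynomial.X - 1)) *
          ∏ ℓ ∈ J, (Polynomial.C ((0:ℝ) ^ (e - mm ℓ) * d1.eval 0) * Polynomial.X
            - Polynomial.C ((0:ℝ) ^ (f ℓ - mm ℓ) * (b1 ℓ).eval 0)) := by
      rw [hG_def]
      simp only [Polynomial.map_mul, Polynomial.map_sub, Polynomial.map_prod, Polynomial.map_C,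
        Polynomial.map_X, Polynomial.map_one, coe_evalRingHom, eval_mul, eval_pow, eval_X]
    have hX1 : (Polynomial.X - 1 : Polynomial ℝ) ≠ 0 := by
      intro h
      have := congrArg (Polynomial.eval (0:ℝ)) h
      simp at this
    have hfactor_ne : ∀ ℓ ∈ J, (Polynomial.C ((0:ℝ) ^ (e - mm ℓ) * d1.eval 0) * Polynomial.X
        - Polynomial.C ((0:ℝ) ^ (f ℓ - mm ℓ) * (b1 ℓ).eval 0)) ≠ 0 := by
      intro ℓ hℓ h0
      rcases le_or_gt e (f ℓ) with hle | hlt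
      · have hmm : mm ℓ = e := min_eq_right hle
        have hA : (0:ℝ) ^ (e - mm ℓ) * d1.eval 0
            = Polynomial.eval 1 (Polynomial.C ((0:ℝ) ^ (e - mm ℓ) * d1.eval 0) * Polynomial.X
                - Polynomial.C ((0:ℝ) ^ (f ℓ - mm ℓ) * (b1 ℓ).eval 0))
              - Polynomial.eval 0 (Polynomial.C ((0:ℝ) ^ (e - mm ℓ) * d1.eval 0) * Polynomial.X
                - Polynomial.C ((0:ℝ) ^ (f ℓ - mm ℓ) * (b1 ℓ).eval 0)) := by
          simp
        rw [h0] at hA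
        rw [hmm, Nat.sub_self, pow_zero, one_mul] at hA
        simp at hA
        exact hd1pos.ne' hA
      · have hmm : mm ℓ = f ℓ := min_eq_left hlt.le
        have hB : (0:ℝ) ^ (f ℓ - mm ℓ) * (b1 ℓ).eval 0
            = - Polynomial.eval 0 (Polynomial.C ((0:ℝ) ^ (e - mm ℓ) * d1.eval 0) * Polynomial.X
                - Polynomial.C ((0:ℝ) ^ (f ℓ - mm ℓ) * (b1 ℓ).eval 0)) := by
          simp
        rw [h0] at hB
        rw [hmm, Nat.sub_self, pow_zero, one_mul] at hB
        simp at hB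
        exact ordPart_eval_zero_ne (a ℓ - a i) (hb_ne ℓ hℓ) hB
    have hw_ne : G.map (Polynomial.evalRingHom 0) ≠ 0 := by
      rw [hw_eq]
      exact mul_ne_zero
        (mul_ne_zero (Polynomial.C_ne_zero.mpr (pow_ne_zero _ hd1pos.ne'))
          (mul_ne_zero Polynomial.X_ne_zero hX1))
        (Finset.prod_ne_zero_iff.mpr hfactor_ne)
    have hσ_ne : ∀ ℓ ∈ J, σ ℓ ≠ 0 := by
      intro ℓ _
      show (if ℓ < i then (1:ℝ) else -1) ≠ 0
      split_ifs <;> norm_num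
    have hc_ne : (-(∏ ℓ ∈ J, σ ℓ) : ℝ) ≠ 0 :=
      neg_ne_zero.mpr (Finset.prod_ne_zero_iff.mpr hσ_ne)
    apply integral_poly_ne_zero (G.map (Polynomial.evalRingHom 0)) hw_ne (-(∏ ℓ ∈ J, σ ℓ)) hc_ne
    intro s hs
    rcases hs.1.eq_or_lt with h0 | h0
    · rw [hev s, ← h0]; norm_num
    rcases hs.2.eq_or_lt with h1 | h1
    · rw [hev s, h1]; norm_num
    have hfacts : ∀ ℓ ∈ J, 0 ≤ σ ℓ * ((0:ℝ) ^ (e - mm ℓ) * d1.eval 0 * s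
        - (0:ℝ) ^ (f ℓ - mm ℓ) * (b1 ℓ).eval 0) := fun ℓ hℓ => hsig ℓ hℓ s ⟨h0, h1⟩
    have hprod : 0 ≤ ∏ ℓ ∈ J, (σ ℓ * ((0:ℝ) ^ (e - mm ℓ) * d1.eval 0 * s
        - (0:ℝ) ^ (f ℓ - mm ℓ) * (b1 ℓ).eval 0)) := Finset.prod_nonneg hfacts
    rw [Finset.prod_mul_distrib] at hprod
    have hrew : (-(∏ ℓ ∈ J, σ ℓ)) * Polynomial.eval s (G.map (Polynomial.evalRingHom 0))
        = (d1.eval 0) ^ 3 * (s * (1 - s)) *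
          ((∏ ℓ ∈ J, σ ℓ) * ∏ ℓ ∈ J, ((0:ℝ) ^ (e - mm ℓ) * d1.eval 0 * s
            - (0:ℝ) ^ (f ℓ - mm ℓ) * (b1 ℓ).eval 0)) := by
      rw [hev s]; ring
    rw [hrew]
    exact mul_nonneg (mul_nonneg (pow_nonneg hd1pos.le 3)
      (mul_nonneg h0.le (by linarith))) hprod
  have hV_ne : polyInt G ≠ 0 := fun h => hV0 (by rw [h]; simp)
  have hU_ne : (X : Polynomial ℝ) ^ N * polyInt G ≠ 0 :=
    mul_ne_zero (pow_ne_zero _ X_ne_zero) hV_ne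
  constructor
  · rw [hTU]; exact hU_ne
  · rw [hTU, rootMultiplicity_mul hU_ne,
      rootMultiplicity_eq_zero (show ¬IsRoot (polyInt G) 0 from hV0),
      show (X : Polynomial ℝ) ^ N = (X - C 0) ^ N by simp,
      rootMultiplicity_X_sub_C_pow, add_zero]
end
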